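/- arXiv:2203.15409 — 7 statements merged into one kernel-verified Lean document; each statement's English description precedes it below -/
import Mathlib

section
/- Let d, n be positive integers, p_1, …, p_d positive reals, and A_i ∈ ℝ^{n×n} for i ∈ {1,…,d}. Then Σ_{i=1}^d p_i (A_i ⊗ A_i) is Schur stable if and only if there exists a symmetric positive definite matrix P ∈ ℝ^{n×n} such that P − Σ_{i=1}^d p_i A_i P A_iᵀ is positive definite. Moreover, if Σ_{i=1}^d p_i (A_i ⊗ A_i) is Schur stable, then for every symmetric positive semidefinite S ∈ ℝ^{n×n} there exists a symmetric positive definite P with P − Σ_{i=1}^d p_i A_i P A_iᵀ − S positive definite. -/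
open Matrix
open scoped Kronecker

/-- A real square matrix is Schur stable if all of its complex eigenvalues have
modulus strictly less than one. -/
def SchurStable {ι : Type} [Fintype ι] [DecidableEq ι] (M : Matrix ι ι ℝ) : Prop :=
  ∀ μ ∈ spectrum ℂ (M.map (algebraMap ℝ ℂ)), ‖μ‖ < 1

namespace SchurAux

variable {d n : ℕ}

/-- The Lyapunov-type operator `X ↦ ∑ ι, c ι • (F ι * X * (F ι)ᵀ)`. -/
def Top {R : Type} [CommRing R] (c : Fin d → R) (F : Fin d → Matrix (Fin n) (Fin n) R)
    (X : Matrix (Fin n) (Fin n) R) : Matrix (Fin n) (Fin n) R :=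
  ∑ ι, c ι • (F ι * X * (F ι)ᵀ)

lemma vec_lemma {R : Type} [CommRing R] (c : Fin d → R) (F : Fin d → Matrix (Fin n) (Fin n) R)
    (X : Matrix (Fin n) (Fin n) R) (q : Fin n × Fin n) :
    ((∑ ι, c ι • (F ι ⊗ₖ F ι)) *ᵥ fun r : Fin n × Fin n => X r.1 r.2) q
      = Top c F X q.1 q.2 := by
  obtain ⟨i, j⟩ := q
  simp only [Top, mulVec, dotProduct, Matrix.sum_apply, Matrix.smul_apply, kroneckerMap_apply,
    Matrix.mul_apply, transpose_apply, smul_eq_mul, Finset.sum_mul, Finset.mul_sum]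
  rw [← Finset.univ_product_univ, Finset.sum_product]
  have h1 : ∀ (f : Fin n → Fin n → Fin d → R),
      (∑ a, ∑ b, ∑ ι, f a b ι) = ∑ ι, ∑ b, ∑ a, f a b ι := fun f => by
    calc (∑ a, ∑ b, ∑ ι, f a b ι) = ∑ b, ∑ a, ∑ ι, f a b ι := Finset.sum_comm
      _ = ∑ b, ∑ ι, ∑ a, f a b ι := Finset.sum_congr rfl fun _ _ => Finset.sum_comm
      _ = ∑ ι, ∑ b, ∑ a, f a b ι := Finset.sum_comm
  rw [h1]
  refine Finset.sum_congr rfl fun ι _ => Finset.sum_congr rfl fun b _ =>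
    Finset.sum_congr rfl fun a _ => by ring


/-- Iterates of `Top`. -/
def TopIter {R : Type} [CommRing R] (c : Fin d → R) (F : Fin d → Matrix (Fin n) (Fin n) R) :
    ℕ → Matrix (Fin n) (Fin n) R → Matrix (Fin n) (Fin n) R
  | 0, X => X
  | k+1, X => Top c F (TopIter c F k X)

lemma vec_iter {R : Type} [CommRing R] (c : Fin d → R) (F : Fin d → Matrix (Fin n) (Fin n) R)
    (X : Matrix (Fin n) (Fin n) R) (k : ℕ) (q : Fin n × Fin n) :
    ((∑ ι, c ι • (F ι ⊗ₖ F ι)) ^ k *ᵥ fun r : Fin n × Fin n => X r.1 r.2) q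
      = TopIter c F k X q.1 q.2 := by
  induction k generalizing q with
  | zero => simp [TopIter]
  | succ k ih =>
    have : ((∑ ι, c ι • (F ι ⊗ₖ F ι)) ^ k *ᵥ fun r : Fin n × Fin n => X r.1 r.2)
        = fun r : Fin n × Fin n => TopIter c F k X r.1 r.2 := funext fun r => ih r
    rw [pow_succ', ← Matrix.mulVec_mulVec, this, vec_lemma]
    rfl

lemma sum_mulVec' {R : Type} [CommRing R] {m : Type} [Fintype m] (M : Fin d → Matrix m m R)
    (v : m → R) : ((∑ ι, M ι) *ᵥ v) = ∑ ι, (M ι *ᵥ v) := by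
  funext i
  simp only [mulVec, dotProduct, Finset.sum_apply, Matrix.sum_apply, Finset.sum_mul]
  exact Finset.sum_comm

lemma dotProduct_sum' {R : Type} [CommRing R] {m : Type} [Fintype m] (x : m → R)
    (w : Fin d → m → R) : x ⬝ᵥ (∑ ι, w ι) = ∑ ι, x ⬝ᵥ w ι := by
  simp only [dotProduct, Finset.sum_apply, Finset.mul_sum]
  exact Finset.sum_comm

lemma bilin_Top {R : Type} [CommRing R] (c : Fin d → R) (F : Fin d → Matrix (Fin n) (Fin n) R)
    (X : Matrix (Fin n) (Fin n) R) (x y : Fin n → R) :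
    x ⬝ᵥ (Top c F X) *ᵥ y
      = ∑ ι, c ι * (((F ι)ᵀ *ᵥ x) ⬝ᵥ X *ᵥ ((F ι)ᵀ *ᵥ y)) := by
  rw [Top, sum_mulVec', dotProduct_sum']
  refine Finset.sum_congr rfl fun ι _ => ?_
  rw [Matrix.smul_mulVec, dotProduct_smul, smul_eq_mul]
  congr 1
  rw [← Matrix.mulVec_mulVec, ← Matrix.mulVec_mulVec, Matrix.dotProduct_mulVec,
    ← Matrix.mulVec_transpose]


lemma abs_mul_le_dot (x : Fin n → ℝ) (i j : Fin n) : |x i * x j| ≤ x ⬝ᵥ x := by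
  have h1 : x i * x i ≤ x ⬝ᵥ x :=
    Finset.single_le_sum (f := fun k => x k * x k) (fun k _ => mul_self_nonneg _)
      (Finset.mem_univ i)
  have h2 : x j * x j ≤ x ⬝ᵥ x :=
    Finset.single_le_sum (f := fun k => x k * x k) (fun k _ => mul_self_nonneg _)
      (Finset.mem_univ j)
  rw [abs_mul]
  nlinarith [sq_nonneg (|x i| - |x j|), abs_mul_abs_self (x i), abs_mul_abs_self (x j),
    abs_nonneg (x i), abs_nonneg (x j)]

lemma dot_self_nonneg (x : Fin n → ℝ) : (0:ℝ) ≤ x ⬝ᵥ x :=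
  Finset.sum_nonneg fun k _ => mul_self_nonneg _

lemma quad_ub (R : Matrix (Fin n) (Fin n) ℝ) (x : Fin n → ℝ) :
    x ⬝ᵥ R *ᵥ x ≤ (∑ i, ∑ j, |R i j|) * (x ⬝ᵥ x) := by
  have : x ⬝ᵥ R *ᵥ x = ∑ i, ∑ j, x i * (R i j * x j) := by
    simp [mulVec, dotProduct, Finset.mul_sum]
  rw [this, Finset.sum_mul]
  refine Finset.sum_le_sum fun i _ => ?_
  rw [Finset.sum_mul]
  refine Finset.sum_le_sum fun j _ => ?_
  calc x i * (R i j * x j) ≤ |x i * (R i j * x j)| := le_abs_self _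
    _ = |R i j| * |x i * x j| := by rw [abs_mul, abs_mul, abs_mul]; ring
    _ ≤ |R i j| * (x ⬝ᵥ x) := by
        exact mul_le_mul_of_nonneg_left (abs_mul_le_dot x i j) (abs_nonneg _)

lemma symm_bilin {R : Matrix (Fin n) (Fin n) ℝ} (hR : Rᵀ = R) (u v : Fin n → ℝ) :
    v ⬝ᵥ R *ᵥ u = u ⬝ᵥ R *ᵥ v := by
  rw [Matrix.dotProduct_mulVec, ← Matrix.mulVec_transpose, hR, dotProduct_comm]

lemma cs_psd {R : Matrix (Fin n) (Fin n) ℝ} (hR : R.PosSemidef) (u v : Fin n → ℝ) :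
    (u ⬝ᵥ R *ᵥ v)^2 ≤ (u ⬝ᵥ R *ᵥ u) * (v ⬝ᵥ R *ᵥ v) := by
  have hsymm : Rᵀ = R := by
    have := hR.isHermitian
    simpa [Matrix.IsHermitian, Matrix.conjTranspose_eq_transpose_of_trivial] using this
  have key : ∀ t : ℝ, 0 ≤ (v ⬝ᵥ R *ᵥ v) * (t * t) + (2 * (u ⬝ᵥ R *ᵥ v)) * t + (u ⬝ᵥ R *ᵥ u) := by
    intro t
    have h0 := hR.dotProduct_mulVec_nonneg (u + t • v)
    have hst : star (u + t • v) = u + t • v := by simp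
    rw [hst] at h0
    have hexp : (u + t • v) ⬝ᵥ R *ᵥ (u + t • v)
        = (v ⬝ᵥ R *ᵥ v) * (t * t) + (2 * (u ⬝ᵥ R *ᵥ v)) * t + (u ⬝ᵥ R *ᵥ u) := by
      rw [Matrix.mulVec_add, Matrix.mulVec_smul, dotProduct_add, add_dotProduct,
        add_dotProduct, dotProduct_smul, smul_dotProduct, smul_dotProduct,
        dotProduct_smul, symm_bilin hsymm u v]
      simp only [smul_eq_mul]
      ring
    rw [hexp] at h0
    exact h0
  have hd := discrim_le_zero key
  rw [discrim] at hd
  nlinarith [hd]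

lemma quad_lb {R : Matrix (Fin n) (Fin n) ℝ} (hR : R.PosDef) :
    ∃ δ : ℝ, 0 < δ ∧ ∀ x, δ * (x ⬝ᵥ x) ≤ x ⬝ᵥ R *ᵥ x := by
  have hRi : (R⁻¹).PosDef := hR.inv
  obtain ⟨S, hS⟩ : ∃ S : ℝ, S = ∑ i, ∑ j, |R⁻¹ i j| := ⟨_, rfl⟩
  have hSnn : (0:ℝ) ≤ S := hS ▸
    Finset.sum_nonneg fun i _ => Finset.sum_nonneg fun j _ => abs_nonneg _
  set K : ℝ := S + 1 with hK
  have hKpos : 0 < K := by linarith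
  refine ⟨K⁻¹, inv_pos.mpr hKpos, fun x => ?_⟩
  have hxx : (0:ℝ) ≤ x ⬝ᵥ x := dot_self_nonneg x
  have hRx : (0:ℝ) ≤ x ⬝ᵥ R *ᵥ x := by
    have := hR.posSemidef.dotProduct_mulVec_nonneg x
    simpa using this
  have hinvub : x ⬝ᵥ R⁻¹ *ᵥ x ≤ K * (x ⬝ᵥ x) := by
    calc x ⬝ᵥ R⁻¹ *ᵥ x ≤ (∑ i, ∑ j, |R⁻¹ i j|) * (x ⬝ᵥ x) := quad_ub _ x
      _ ≤ K * (x ⬝ᵥ x) := by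
          apply mul_le_mul_of_nonneg_right _ hxx
          rw [hK, hS]; linarith [hS ▸ hSnn]
  have hRRi : R *ᵥ (R⁻¹ *ᵥ x) = x := by
    rw [Matrix.mulVec_mulVec, Matrix.mul_nonsing_inv _ (Matrix.isUnit_iff_isUnit_det _ |>.mp hR.isUnit), Matrix.one_mulVec]
  have hcs := cs_psd hR.posSemidef x (R⁻¹ *ᵥ x)
  rw [hRRi] at hcs
  rw [show (R⁻¹ *ᵥ x) ⬝ᵥ x = x ⬝ᵥ R⁻¹ *ᵥ x from dotProduct_comm _ _] at hcs
  -- hcs : (x ⬝ᵥ x)^2 ≤ (x ⬝ᵥ R *ᵥ x) * (x ⬝ᵥ R⁻¹ *ᵥ x)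
  rcases eq_or_lt_of_le hxx with h0 | h0
  · rw [← h0, mul_zero]
    exact hRx
  · rw [inv_mul_le_iff₀ hKpos]
    have h2 : (x ⬝ᵥ x)^2 ≤ (x ⬝ᵥ R *ᵥ x) * (K * (x ⬝ᵥ x)) := by
      calc (x ⬝ᵥ x)^2 ≤ (x ⬝ᵥ R *ᵥ x) * (x ⬝ᵥ R⁻¹ *ᵥ x) := hcs
        _ ≤ (x ⬝ᵥ R *ᵥ x) * (K * (x ⬝ᵥ x)) := mul_le_mul_of_nonneg_left hinvub hRx
    nlinarith [h2]


/-- Complexification of a real matrix. -/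
noncomputable def cmap (R : Matrix (Fin n) (Fin n) ℝ) : Matrix (Fin n) (Fin n) ℂ :=
  R.map (algebraMap ℝ ℂ)

/-- Real part of the complex quadratic form. -/
noncomputable def qf (Z : Matrix (Fin n) (Fin n) ℂ) (z : Fin n → ℂ) : ℝ :=
  (star z ⬝ᵥ Z *ᵥ z).re

lemma qf_real (R : Matrix (Fin n) (Fin n) ℝ) (z : Fin n → ℂ) :
    qf (cmap R) z = (fun i => (z i).re) ⬝ᵥ R *ᵥ (fun i => (z i).re)
      + (fun i => (z i).im) ⬝ᵥ R *ᵥ (fun i => (z i).im) := by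
  simp only [qf, cmap, dotProduct, mulVec, map_apply, Pi.star_apply, Finset.mul_sum]
  rw [Complex.re_sum]
  have hterm : ∀ i j, (star (z i) * ((algebraMap ℝ ℂ) (R i j) * z j)).re
      = R i j * ((z i).re * (z j).re) + R i j * ((z i).im * (z j).im) := by
    intro i j
    simp only [RCLike.star_def, Complex.coe_algebraMap, Complex.mul_re, Complex.mul_im,
      Complex.conj_re, Complex.conj_im, Complex.ofReal_re, Complex.ofReal_im]
    ring
  have : ∀ i, (∑ j, star (z i) * ((algebraMap ℝ ℂ) (R i j) * z j)).re
      = ∑ j, (R i j * ((z i).re * (z j).re) + R i j * ((z i).im * (z j).im)) := by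
    intro i; rw [Complex.re_sum]; exact Finset.sum_congr rfl fun j _ => hterm i j
  rw [Finset.sum_congr rfl fun i _ => this i]
  rw [← Finset.sum_add_distrib]
  refine Finset.sum_congr rfl fun i _ => ?_
  rw [← Finset.sum_add_distrib]
  refine Finset.sum_congr rfl fun j _ => by ring

lemma qf_nonneg_of_psd {R : Matrix (Fin n) (Fin n) ℝ} (hR : R.PosSemidef) (z : Fin n → ℂ) :
    0 ≤ qf (cmap R) z := by
  rw [qf_real]
  have h1 := hR.dotProduct_mulVec_nonneg (fun i => (z i).re)
  have h2 := hR.dotProduct_mulVec_nonneg (fun i => (z i).im)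
  simp only [star_trivial] at h1 h2
  exact add_nonneg h1 h2

lemma qf_sub (Z W : Matrix (Fin n) (Fin n) ℂ) (z : Fin n → ℂ) :
    qf (Z - W) z = qf Z z - qf W z := by
  simp only [qf, Matrix.sub_mulVec, dotProduct_sub, Complex.sub_re]

lemma cmap_sub (R S : Matrix (Fin n) (Fin n) ℝ) : cmap (R - S) = cmap R - cmap S := by
  ext i j; simp [cmap]

lemma qf_mono {R S : Matrix (Fin n) (Fin n) ℝ} (h : (S - R).PosSemidef) (z : Fin n → ℂ) :
    qf (cmap R) z ≤ qf (cmap S) z := by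
  have := qf_nonneg_of_psd h z
  rw [cmap_sub, qf_sub] at this
  linarith

lemma cmap_Top (c : Fin d → ℝ) (F : Fin d → Matrix (Fin n) (Fin n) ℝ)
    (X : Matrix (Fin n) (Fin n) ℝ) :
    cmap (Top c F X) = Top (fun ι => (c ι : ℂ)) (fun ι => cmap (F ι)) (cmap X) := by
  ext i j
  simp only [Top, cmap, map_apply, Matrix.sum_apply, Matrix.smul_apply, Matrix.mul_apply, transpose_apply,
    smul_eq_mul]
  push_cast
  rfl

lemma star_mulVec_cmap (F : Matrix (Fin n) (Fin n) ℝ) (z : Fin n → ℂ) :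
    (cmap F)ᵀ *ᵥ star z = star ((cmap F)ᵀ *ᵥ z) := by
  funext j
  simp only [mulVec, dotProduct, Pi.star_apply, transpose_apply, cmap, map_apply,
    star_sum, star_mul', RCLike.star_def, Complex.coe_algebraMap, Complex.conj_ofReal,
    mul_comm]

lemma qf_Top (c : Fin d → ℝ) (F : Fin d → Matrix (Fin n) (Fin n) ℝ)
    (Z : Matrix (Fin n) (Fin n) ℂ) (z : Fin n → ℂ) :
    qf (Top (fun ι => (c ι : ℂ)) (fun ι => cmap (F ι)) Z) z
      = ∑ ι, c ι * qf Z ((cmap (F ι))ᵀ *ᵥ z) := by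
  have hb := bilin_Top (fun ι => (c ι : ℂ)) (fun ι => cmap (F ι)) Z (star z) z
  simp only [qf]
  rw [hb, Complex.re_sum]
  refine Finset.sum_congr rfl fun ι _ => ?_
  rw [star_mulVec_cmap, Complex.re_ofReal_mul]


lemma psd_smul_real {X : Matrix (Fin n) (Fin n) ℝ} (hX : X.PosSemidef) {c : ℝ} (hc : 0 ≤ c) :
    (c • X).PosSemidef := by
  refine Matrix.PosSemidef.of_dotProduct_mulVec_nonneg ?_ ?_
  · unfold Matrix.IsHermitian
    rw [Matrix.conjTranspose_smul]
    rw [hX.1]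
    simp
  · intro x
    have := hX.dotProduct_mulVec_nonneg x
    have h2 : star x ⬝ᵥ (c • X) *ᵥ x = c * (star x ⬝ᵥ X *ᵥ x) := by
      rw [Matrix.smul_mulVec, dotProduct_smul, smul_eq_mul]
    rw [h2]
    exact mul_nonneg hc this

lemma Top_psd_real (c : Fin d → ℝ) (hc : ∀ ι, 0 ≤ c ι) (F : Fin d → Matrix (Fin n) (Fin n) ℝ)
    {X : Matrix (Fin n) (Fin n) ℝ} (hX : X.PosSemidef) : (Top c F X).PosSemidef := by
  unfold Top
  refine Finset.sum_induction _ (fun Y : Matrix (Fin n) (Fin n) ℝ => Matrix.PosSemidef Y) (fun a b ha hb => ha.add hb)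
    Matrix.PosSemidef.zero ?_
  intro ι _
  apply psd_smul_real _ (hc ι)
  have := hX.mul_mul_conjTranspose_same (F ι)
  rwa [Matrix.conjTranspose_eq_transpose_of_trivial] at this

lemma TopIter_psd_real (c : Fin d → ℝ) (hc : ∀ ι, 0 ≤ c ι) (F : Fin d → Matrix (Fin n) (Fin n) ℝ)
    {X : Matrix (Fin n) (Fin n) ℝ} (hX : X.PosSemidef) (k : ℕ) :
    (TopIter c F k X).PosSemidef := by
  induction k with
  | zero => exact hX
  | succ k ih => exact Top_psd_real c hc F ih

lemma cmap_conjTranspose (R : Matrix (Fin n) (Fin n) ℝ) : (cmap R)ᴴ = cmap Rᵀ := by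
  ext i j
  simp [cmap, Matrix.conjTranspose_apply, Complex.conj_ofReal]

lemma Top_herm (c : Fin d → ℝ) (F : Fin d → Matrix (Fin n) (Fin n) ℝ)
    {Z : Matrix (Fin n) (Fin n) ℂ} (hZ : Z.IsHermitian) :
    (Top (fun ι => (c ι : ℂ)) (fun ι => cmap (F ι)) Z).IsHermitian := by
  unfold Top Matrix.IsHermitian
  rw [Matrix.conjTranspose_sum]
  refine Finset.sum_congr rfl fun ι _ => ?_
  have h1 : ((cmap (F ι))ᵀ)ᴴ = cmap (F ι) := by
    ext i j; simp [cmap, Matrix.conjTranspose_apply, Complex.conj_ofReal]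
  have h2 : (cmap (F ι))ᴴ = (cmap (F ι))ᵀ := by
    ext i j; simp [cmap, Matrix.conjTranspose_apply, Complex.conj_ofReal]
  rw [Matrix.conjTranspose_smul, Matrix.conjTranspose_mul, Matrix.conjTranspose_mul, h1, h2,
    hZ.eq]
  simp [RCLike.star_def, Complex.conj_ofReal, Matrix.mul_assoc]

lemma TopIter_herm (c : Fin d → ℝ) (F : Fin d → Matrix (Fin n) (Fin n) ℝ)
    {Z : Matrix (Fin n) (Fin n) ℂ} (hZ : Z.IsHermitian) (k : ℕ) :
    (TopIter (fun ι => (c ι : ℂ)) (fun ι => cmap (F ι)) k Z).IsHermitian := by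
  induction k with
  | zero => exact hZ
  | succ k ih => exact Top_herm c F ih

lemma Top_add {R : Type} [CommRing R] (c : Fin d → R) (F : Fin d → Matrix (Fin n) (Fin n) R)
    (X Y : Matrix (Fin n) (Fin n) R) : Top c F (X + Y) = Top c F X + Top c F Y := by
  unfold Top
  rw [← Finset.sum_add_distrib]
  refine Finset.sum_congr rfl fun ι _ => ?_
  rw [Matrix.mul_add, Matrix.add_mul, smul_add]

lemma Top_smul {R : Type} [CommRing R] (c : Fin d → R) (F : Fin d → Matrix (Fin n) (Fin n) R)
    (a : R) (X : Matrix (Fin n) (Fin n) R) : Top c F (a • X) = a • Top c F X := by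
  unfold Top
  rw [Finset.smul_sum]
  refine Finset.sum_congr rfl fun ι _ => ?_
  rw [smul_comm a (c ι)]
  congr 1
  rw [Matrix.mul_smul, Matrix.smul_mul]

lemma TopIter_add_smul {R : Type} [CommRing R] (c : Fin d → R)
    (F : Fin d → Matrix (Fin n) (Fin n) R) (a : R) (X Y : Matrix (Fin n) (Fin n) R) (k : ℕ) :
    TopIter c F k (X + a • Y) = TopIter c F k X + a • TopIter c F k Y := by
  induction k with
  | zero => rfl
  | succ k ih => show Top c F _ = _; rw [ih, Top_add, Top_smul]; rfl


lemma star_single (i : Fin n) : star (Pi.single i 1 : Fin n → ℂ) = Pi.single i 1 := by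
  funext r
  simp only [Pi.star_apply, Pi.single_apply, apply_ite, star_one, star_zero]
  split_ifs <;> simp

lemma qf_two (G : Matrix (Fin n) (Fin n) ℂ) (i j : Fin n) (a b : ℂ) :
    star (a • (Pi.single i 1 : Fin n → ℂ) + b • (Pi.single j 1 : Fin n → ℂ)) ⬝ᵥ
        G *ᵥ (a • (Pi.single i 1 : Fin n → ℂ) + b • (Pi.single j 1 : Fin n → ℂ))
      = star a * a * G i i + star a * b * G i j + star b * a * G j i + star b * b * G j j := by
  rw [Matrix.mulVec_add, Matrix.mulVec_smul, Matrix.mulVec_smul, Matrix.mulVec_single_one,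
    Matrix.mulVec_single_one]
  rw [star_add, star_smul, star_smul, star_single, star_single]
  rw [add_dotProduct, smul_dotProduct, smul_dotProduct, single_dotProduct, single_dotProduct]
  simp only [Pi.add_apply, Pi.smul_apply, smul_eq_mul, mul_one, Matrix.col_apply]
  ring

lemma cmap_one : cmap (1 : Matrix (Fin n) (Fin n) ℝ) = 1 := by
  ext i j
  simp [cmap, Matrix.one_apply, apply_ite]

lemma qf_one_eq (z : Fin n → ℂ) :
    qf 1 z = (fun i => (z i).re) ⬝ᵥ (fun i => (z i).re) + (fun i => (z i).im) ⬝ᵥ (fun i => (z i).im) := by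
  rw [← cmap_one, qf_real]
  rw [Matrix.one_mulVec, Matrix.one_mulVec]

lemma qf_one_nonneg (z : Fin n → ℂ) : 0 ≤ qf 1 z := by
  rw [qf_one_eq]
  exact add_nonneg (dot_self_nonneg _) (dot_self_nonneg _)

lemma norm_sq_le_qf_one (z : Fin n → ℂ) (i : Fin n) : ‖z i‖ * ‖z i‖ ≤ qf 1 z := by
  rw [qf_one_eq]
  have : ‖z i‖ * ‖z i‖ = (z i).re * (z i).re + (z i).im * (z i).im := by
    calc ‖z i‖ * ‖z i‖ = ‖z i‖ ^ 2 := by rw [sq]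
      _ = Complex.normSq (z i) := Complex.sq_norm _
      _ = (z i).re * (z i).re + (z i).im * (z i).im := Complex.normSq_apply _
  rw [this]
  exact add_le_add
    (Finset.single_le_sum (f := fun k => (z k).re * (z k).re) (fun k _ => mul_self_nonneg _)
      (Finset.mem_univ i))
    (Finset.single_le_sum (f := fun k => (z k).im * (z k).im) (fun k _ => mul_self_nonneg _)
      (Finset.mem_univ i))

lemma norm_mul_le_qf_one (z : Fin n → ℂ) (i j : Fin n) : ‖z i‖ * ‖z j‖ ≤ qf 1 z := by
  have hi := norm_sq_le_qf_one z i
  have hj := norm_sq_le_qf_one z j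
  nlinarith [sq_nonneg (‖z i‖ - ‖z j‖), norm_nonneg (z i), norm_nonneg (z j)]

lemma qf_abs_le (Z : Matrix (Fin n) (Fin n) ℂ) (z : Fin n → ℂ) :
    |qf Z z| ≤ (∑ i, ∑ j, ‖Z i j‖) * qf 1 z := by
  have hexp : qf Z z = ∑ i, ∑ j, (star (z i) * (Z i j * z j)).re := by
    simp only [qf, dotProduct, mulVec, Finset.mul_sum, Pi.star_apply]
    rw [Complex.re_sum]
    exact Finset.sum_congr rfl fun i _ => Complex.re_sum _ _
  rw [hexp, Finset.sum_mul]
  calc |∑ i, ∑ j, (star (z i) * (Z i j * z j)).re|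
      ≤ ∑ i, |∑ j, (star (z i) * (Z i j * z j)).re| := Finset.abs_sum_le_sum_abs _ _
    _ ≤ ∑ i, ∑ j, |(star (z i) * (Z i j * z j)).re| :=
        Finset.sum_le_sum fun i _ => Finset.abs_sum_le_sum_abs _ _
    _ ≤ ∑ i, ∑ j, ‖Z i j‖ * qf 1 z := by
        refine Finset.sum_le_sum fun i _ => Finset.sum_le_sum fun j _ => ?_
        calc |(star (z i) * (Z i j * z j)).re| ≤ ‖star (z i) * (Z i j * z j)‖ :=
              Complex.abs_re_le_norm _
          _ = ‖Z i j‖ * (‖z i‖ * ‖z j‖) := by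
              rw [norm_mul, norm_mul, norm_star]; ring
          _ ≤ ‖Z i j‖ * qf 1 z :=
              mul_le_mul_of_nonneg_left (norm_mul_le_qf_one z i j) (norm_nonneg _)
    _ = ∑ i, (∑ j, ‖Z i j‖) * qf 1 z := by
        exact Finset.sum_congr rfl fun i _ => (Finset.sum_mul _ _ _).symm

lemma herm_entry_le {G : Matrix (Fin n) (Fin n) ℂ} (hG : G.IsHermitian) {c : ℝ} (hc : 0 ≤ c)
    (hbd : ∀ z, |qf G z| ≤ c * qf 1 z) (i j : Fin n) : ‖G i j‖ ≤ 6 * c := by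
  have hji : G j i = star (G i j) := by
    conv_lhs => rw [← hG.eq]
    exact Matrix.conjTranspose_apply G i j ▸ rfl
  set u : ℂ → ℂ → (Fin n → ℂ) := fun a b => a • (Pi.single i 1 : Fin n → ℂ) + b • (Pi.single j 1 : Fin n → ℂ) with hu
  have hq : ∀ a b : ℂ, qf G (u a b)
      = (star a * a * G i i + star a * b * G i j + star b * a * G j i + star b * b * G j j).re := by
    intro a b; rw [qf, hu, qf_two]
  have hq1 : ∀ a b : ℂ, qf 1 (u a b)
      = (star a * a * (1 : Matrix (Fin n) (Fin n) ℂ) i i + star a * b * (1:Matrix (Fin n) (Fin n) ℂ) i j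
        + star b * a * (1:Matrix (Fin n) (Fin n) ℂ) j i + star b * b * (1:Matrix (Fin n) (Fin n) ℂ) j j).re := by
    intro a b; rw [qf, hu, qf_two]
  -- values of qf 1
  have h1a : qf 1 (u 1 0) = 1 := by rw [hq1]; simp
  have h1b : qf 1 (u 0 1) = 1 := by rw [hq1]; simp
  have h1c : qf 1 (u 1 1) ≤ 4 := by
    rw [hq1]
    rcases eq_or_ne i j with h | h
    · simp [h, Matrix.one_apply, Complex.add_re]; norm_num
    · simp [h, h.symm, Matrix.one_apply, Complex.add_re]; norm_num
  have h1d : qf 1 (u 1 Complex.I) = 2 := by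
    rw [hq1]
    rcases eq_or_ne i j with h | h
    · simp [h, Matrix.one_apply, Complex.add_re, Complex.I_re, Complex.I_im]; norm_num
    · simp [h, h.symm, Matrix.one_apply, Complex.add_re, Complex.I_re, Complex.I_im]; norm_num
  -- values of qf G
  have hg00 : qf G (u 1 0) = (G i i).re := by rw [hq]; simp
  have hg01 : qf G (u 0 1) = (G j j).re := by rw [hq]; simp
  have hg11 : qf G (u 1 1) = (G i i).re + (G j j).re + 2 * (G i j).re := by
    rw [hq, hji]
    simp [Complex.add_re, Complex.conj_re]
    ring
  have hgI : qf G (u 1 Complex.I) = (G i i).re + (G j j).re - 2 * (G i j).im := by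
    rw [hq, hji]
    simp [Complex.add_re, Complex.mul_re, Complex.I_re, Complex.I_im, Complex.conj_re,
      Complex.conj_im]
    ring
  have b00 := hbd (u 1 0); rw [hg00, h1a, mul_one] at b00
  have b01 := hbd (u 0 1); rw [hg01, h1b, mul_one] at b01
  have b11 := hbd (u 1 1); rw [hg11] at b11
  have bI := hbd (u 1 Complex.I); rw [hgI, h1d] at bI
  have hb11 : |(G i i).re + (G j j).re + 2 * (G i j).re| ≤ 4 * c := by
    calc |(G i i).re + (G j j).re + 2 * (G i j).re| ≤ c * qf 1 (u 1 1) := b11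
      _ ≤ 4 * c := by nlinarith [h1c, hc, qf_one_nonneg (u 1 1)]
  have hre : |(G i j).re| ≤ 3 * c := by
    rw [abs_le] at hb11 b00 b01 ⊢
    constructor <;> linarith [hb11.1, hb11.2, b00.1, b00.2, b01.1, b01.2]
  have him : |(G i j).im| ≤ 2 * c := by
    rw [abs_le] at bI b00 b01 ⊢
    constructor <;> linarith [bI.1, bI.2, b00.1, b00.2, b01.1, b01.2]
  calc ‖G i j‖ ≤ |(G i j).re| + |(G i j).im| := Complex.norm_le_abs_re_add_abs_im _
    _ ≤ 6 * c := by linarith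


theorem backward (p : Fin d → ℝ) (hp : ∀ ι, 0 < p ι)
    (A : Fin d → Matrix (Fin n) (Fin n) ℝ) (P : Matrix (Fin n) (Fin n) ℝ)
    (hP : P.PosDef) (hQ : (P - Top p A P).PosDef) :
    SchurStable (∑ ι, p ι • (A ι ⊗ₖ A ι)) := by
  intro μ hμ
  set M := ∑ ι, p ι • (A ι ⊗ₖ A ι) with hM
  set B := M.map (algebraMap ℝ ℂ) with hB
  -- eigenvector for μ
  have hdet : ((algebraMap ℂ (Matrix (Fin n × Fin n) (Fin n × Fin n) ℂ)) μ - B).det = 0 := by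
    have h1 := spectrum.mem_iff.mp hμ
    by_contra hne
    exact h1 ((Matrix.isUnit_iff_isUnit_det _).mpr (isUnit_iff_ne_zero.mpr hne))
  obtain ⟨v, hv0, hv⟩ := (Matrix.exists_mulVec_eq_zero_iff).mpr hdet
  have heig : B *ᵥ v = μ • v := by
    rw [Matrix.sub_mulVec] at hv
    have h3 : (algebraMap ℂ (Matrix (Fin n × Fin n) (Fin n × Fin n) ℂ) μ) *ᵥ v = μ • v := by
      rw [Algebra.algebraMap_eq_smul_one, Matrix.smul_mulVec, Matrix.one_mulVec]
    rw [h3] at hv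
    exact (sub_eq_zero.mp hv).symm
  have heigk : ∀ k : ℕ, B ^ k *ᵥ v = μ ^ k • v := by
    intro k
    induction k with
    | zero => simp [Matrix.one_mulVec]
    | succ k ih =>
      rw [pow_succ', ← Matrix.mulVec_mulVec, ih, Matrix.mulVec_smul, heig, pow_succ']
      rw [smul_smul, mul_comm]
  -- quantitative Lyapunov bounds
  obtain ⟨δ, hδ, hlb⟩ := quad_lb hQ
  obtain ⟨δP, hδP, hlbP⟩ := quad_lb hP
  obtain ⟨SP, hSP⟩ : ∃ SP : ℝ, SP = ∑ i, ∑ j, |P i j| := ⟨_, rfl⟩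
  have hSPnn : 0 ≤ SP := hSP ▸
    Finset.sum_nonneg fun i _ => Finset.sum_nonneg fun j _ => abs_nonneg _
  set KP : ℝ := SP + 1 with hKP
  have hKPpos : 0 < KP := by linarith
  have hubP : ∀ x, x ⬝ᵥ P *ᵥ x ≤ KP * (x ⬝ᵥ x) := by
    intro x
    calc x ⬝ᵥ P *ᵥ x ≤ (∑ i, ∑ j, |P i j|) * (x ⬝ᵥ x) := quad_ub P x
      _ ≤ KP * (x ⬝ᵥ x) := by
          apply mul_le_mul_of_nonneg_right _ (dot_self_nonneg x)
          rw [hKP, hSP]; linarith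
  set ε : ℝ := min (δ / KP) (1/2) with hε
  have hεpos : 0 < ε := lt_min (div_pos hδ hKPpos) (by norm_num)
  set α : ℝ := 1 - ε with hα
  have hα0 : 0 ≤ α := by
    have : ε ≤ 1/2 := min_le_right _ _
    rw [hα]; linarith
  have hα1 : α < 1 := by rw [hα]; linarith
  have keyR : ∀ x, x ⬝ᵥ (Top p A P) *ᵥ x ≤ α * (x ⬝ᵥ P *ᵥ x) := by
    intro x
    have h1 : δ * (x ⬝ᵥ x) ≤ x ⬝ᵥ (P - Top p A P) *ᵥ x := hlb x
    have h2 : x ⬝ᵥ (P - Top p A P) *ᵥ x = x ⬝ᵥ P *ᵥ x - x ⬝ᵥ (Top p A P) *ᵥ x := by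
      rw [Matrix.sub_mulVec, dotProduct_sub]
    have h3 : x ⬝ᵥ P *ᵥ x ≤ KP * (x ⬝ᵥ x) := hubP x
    have h4 : 0 ≤ x ⬝ᵥ P *ᵥ x := by
      have := hP.posSemidef.dotProduct_mulVec_nonneg x; simpa using this
    have h5 : ε * (x ⬝ᵥ P *ᵥ x) ≤ δ * (x ⬝ᵥ x) := by
      have h6 : ε ≤ δ / KP := min_le_left _ _
      have h7 : ε * (x ⬝ᵥ P *ᵥ x) ≤ (δ / KP) * (x ⬝ᵥ P *ᵥ x) :=
        mul_le_mul_of_nonneg_right h6 h4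
      have h8 : (δ / KP) * (x ⬝ᵥ P *ᵥ x) ≤ (δ / KP) * (KP * (x ⬝ᵥ x)) :=
        mul_le_mul_of_nonneg_left h3 (le_of_lt (div_pos hδ hKPpos))
      have h9 : (δ / KP) * (KP * (x ⬝ᵥ x)) = δ * (x ⬝ᵥ x) := by
        field_simp
      linarith
    rw [hα]; linarith [h1, h2.symm ▸ h1]
  set Pc := cmap P with hPc
  have keyC : ∀ z, qf (cmap (Top p A P)) z ≤ α * qf Pc z := by
    intro z
    rw [hPc, qf_real, qf_real]
    have h1 := keyR (fun i => (z i).re)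
    have h2 := keyR (fun i => (z i).im)
    nlinarith [h1, h2]
  have qfPc_nonneg : ∀ z, 0 ≤ qf Pc z := fun z => qf_nonneg_of_psd hP.posSemidef z
  have qfPc_ub : ∀ z, qf Pc z ≤ KP * qf 1 z := by
    intro z
    rw [hPc, qf_real, qf_one_eq]
    have h1 := hubP (fun i => (z i).re)
    have h2 := hubP (fun i => (z i).im)
    linarith
  have qfPc_lb : ∀ z, δP * qf 1 z ≤ qf Pc z := by
    intro z
    rw [hPc, qf_real, qf_one_eq]
    have h1 := hlbP (fun i => (z i).re)
    have h2 := hlbP (fun i => (z i).im)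
    linarith
  set cp : Fin d → ℂ := fun ι => ((p ι : ℝ) : ℂ) with hcp
  set cA : Fin d → Matrix (Fin n) (Fin n) ℂ := fun ι => cmap (A ι) with hcA
  -- iteration bound
  have hiter : ∀ (Z : Matrix (Fin n) (Fin n) ℂ) (β : ℝ), 0 ≤ β →
      (∀ z, |qf Z z| ≤ β * qf Pc z) →
      ∀ k z, |qf (TopIter cp cA k Z) z| ≤ β * α ^ k * qf Pc z := by
    intro Z β hβ hZb k
    induction k with
    | zero => intro z; simpa [TopIter] using hZb z
    | succ k ih =>
      intro z
      have hstep : qf (TopIter cp cA (k+1) Z) z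
          = ∑ ι, p ι * qf (TopIter cp cA k Z) ((cmap (A ι))ᵀ *ᵥ z) := by
        show qf (Top cp cA (TopIter cp cA k Z)) z = _
        rw [hcp, hcA]
        exact qf_Top p A _ z
      rw [hstep]
      have habs : |∑ ι, p ι * qf (TopIter cp cA k Z) ((cmap (A ι))ᵀ *ᵥ z)|
          ≤ ∑ ι, p ι * (β * α ^ k * qf Pc ((cmap (A ι))ᵀ *ᵥ z)) := by
        calc |∑ ι, p ι * qf (TopIter cp cA k Z) ((cmap (A ι))ᵀ *ᵥ z)|
            ≤ ∑ ι, |p ι * qf (TopIter cp cA k Z) ((cmap (A ι))ᵀ *ᵥ z)| :=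
              Finset.abs_sum_le_sum_abs _ _
          _ ≤ ∑ ι, p ι * (β * α ^ k * qf Pc ((cmap (A ι))ᵀ *ᵥ z)) := by
              refine Finset.sum_le_sum fun ι _ => ?_
              rw [abs_mul, abs_of_pos (hp ι)]
              exact mul_le_mul_of_nonneg_left (ih _) (le_of_lt (hp ι))
      have hsum2 : ∑ ι, p ι * (β * α ^ k * qf Pc ((cmap (A ι))ᵀ *ᵥ z))
          = β * α ^ k * qf (cmap (Top p A P)) z := by
        rw [cmap_Top]
        have := qf_Top p A (cmap P) z
        rw [← hPc] at this ⊢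
        rw [show (Top (fun ι => ((p ι : ℝ) : ℂ)) (fun ι => cmap (A ι)) Pc) = Top cp cA Pc from rfl]
        rw [hcp, hcA]
        rw [this, Finset.mul_sum]
        exact Finset.sum_congr rfl fun ι _ => by ring
      have hfin : β * α ^ k * qf (cmap (Top p A P)) z ≤ β * α ^ (k+1) * qf Pc z := by
        have h1 := keyC z
        have h2 : 0 ≤ β * α ^ k := mul_nonneg hβ (pow_nonneg hα0 k)
        calc β * α ^ k * qf (cmap (Top p A P)) z ≤ β * α ^ k * (α * qf Pc z) := by
              apply mul_le_mul_of_nonneg_left h1 h2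
          _ = β * α ^ (k+1) * qf Pc z := by ring
      calc |∑ ι, p ι * qf (TopIter cp cA k Z) ((cmap (A ι))ᵀ *ᵥ z)|
          ≤ ∑ ι, p ι * (β * α ^ k * qf Pc ((cmap (A ι))ᵀ *ᵥ z)) := habs
        _ = β * α ^ k * qf (cmap (Top p A P)) z := hsum2
        _ ≤ β * α ^ (k+1) * qf Pc z := hfin
  -- initial bound for arbitrary matrices
  have hinit : ∀ Z : Matrix (Fin n) (Fin n) ℂ, ∃ β : ℝ, 0 ≤ β ∧ ∀ z, |qf Z z| ≤ β * qf Pc z := by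
    intro Z
    obtain ⟨CZ, hCZ⟩ : ∃ CZ : ℝ, CZ = ∑ i, ∑ j, ‖Z i j‖ := ⟨_, rfl⟩
    have hCZnn : 0 ≤ CZ := hCZ ▸
      Finset.sum_nonneg fun i _ => Finset.sum_nonneg fun j _ => norm_nonneg _
    refine ⟨CZ / δP, div_nonneg hCZnn (le_of_lt hδP), fun z => ?_⟩
    have h1 : |qf Z z| ≤ CZ * qf 1 z := hCZ ▸ qf_abs_le Z z
    have h2 := qfPc_lb z
    have h3 : CZ * qf 1 z ≤ (CZ / δP) * qf Pc z := by
      rw [div_mul_eq_mul_div, le_div_iff₀ hδP]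
      calc CZ * qf 1 z * δP = CZ * (δP * qf 1 z) := by ring
        _ ≤ CZ * qf Pc z := mul_le_mul_of_nonneg_left h2 hCZnn
        _ = CZ * qf Pc z := rfl
    linarith
  -- entrywise bound for hermitian seeds
  have hherm : ∀ (Z : Matrix (Fin n) (Fin n) ℂ), Z.IsHermitian → ∃ C : ℝ, 0 ≤ C ∧
      ∀ k i j, ‖TopIter cp cA k Z i j‖ ≤ C * α ^ k := by
    intro Z hZ
    obtain ⟨β, hβ, hβb⟩ := hinit Z
    refine ⟨6 * (β * KP), by positivity, fun k i j => ?_⟩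
    have hGh : (TopIter cp cA k Z).IsHermitian := by
      rw [hcp, hcA]; exact TopIter_herm p A hZ k
    have hbd : ∀ z, |qf (TopIter cp cA k Z) z| ≤ (β * α ^ k * KP) * qf 1 z := by
      intro z
      calc |qf (TopIter cp cA k Z) z| ≤ β * α ^ k * qf Pc z := hiter Z β hβ hβb k z
        _ ≤ β * α ^ k * (KP * qf 1 z) := by
            apply mul_le_mul_of_nonneg_left (qfPc_ub z)
            exact mul_nonneg hβ (pow_nonneg hα0 k)
        _ = (β * α ^ k * KP) * qf 1 z := by ring
    have hc : (0:ℝ) ≤ β * α ^ k * KP := by positivity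
    have := herm_entry_le hGh hc hbd i j
    calc ‖TopIter cp cA k Z i j‖ ≤ 6 * (β * α ^ k * KP) := this
      _ = 6 * (β * KP) * α ^ k := by ring
  -- entrywise bound for arbitrary seeds
  have harb : ∀ (Z : Matrix (Fin n) (Fin n) ℂ), ∃ C : ℝ, 0 ≤ C ∧
      ∀ k i j, ‖TopIter cp cA k Z i j‖ ≤ C * α ^ k := by
    intro Z
    set H1 : Matrix (Fin n) (Fin n) ℂ := (2⁻¹ : ℂ) • (Z + Zᴴ) with hH1
    set H2 : Matrix (Fin n) (Fin n) ℂ := (-(2⁻¹) * Complex.I) • (Z - Zᴴ) with hH2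
    have hZdecomp : Z = H1 + Complex.I • H2 := by
      rw [hH1, hH2, smul_smul]
      have : Complex.I * (-(2⁻¹) * Complex.I) = (2⁻¹ : ℂ) := by
        rw [show Complex.I * (-(2⁻¹) * Complex.I) = -(2⁻¹) * (Complex.I * Complex.I) by ring,
          Complex.I_mul_I]
        ring
      rw [this]
      module
    have hH1h : H1.IsHermitian := by
      rw [hH1]
      unfold Matrix.IsHermitian
      rw [Matrix.conjTranspose_smul, Matrix.conjTranspose_add, Matrix.conjTranspose_conjTranspose]
      rw [add_comm]
      congr 1
      simp
    have hH2h : H2.IsHermitian := by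
      rw [hH2]
      unfold Matrix.IsHermitian
      rw [Matrix.conjTranspose_smul, Matrix.conjTranspose_sub, Matrix.conjTranspose_conjTranspose]
      have hst : star (-(2⁻¹) * Complex.I) = (2⁻¹ : ℂ) * Complex.I := by
        simp
      rw [hst, show ((2⁻¹ : ℂ) * Complex.I) = -(-(2⁻¹) * Complex.I) by ring, neg_smul,
        ← smul_neg, neg_sub]
    obtain ⟨C1, hC1, hC1b⟩ := hherm H1 hH1h
    obtain ⟨C2, hC2, hC2b⟩ := hherm H2 hH2h
    refine ⟨C1 + C2, by positivity, fun k i j => ?_⟩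
    have hlin : TopIter cp cA k Z = TopIter cp cA k H1 + Complex.I • TopIter cp cA k H2 := by
      conv_lhs => rw [hZdecomp]
      exact TopIter_add_smul _ _ _ _ _ k
    rw [hlin]
    have : (TopIter cp cA k H1 + Complex.I • TopIter cp cA k H2) i j
        = TopIter cp cA k H1 i j + Complex.I * TopIter cp cA k H2 i j := by
      simp [Matrix.add_apply, Matrix.smul_apply]
    rw [this]
    calc ‖TopIter cp cA k H1 i j + Complex.I * TopIter cp cA k H2 i j‖
        ≤ ‖TopIter cp cA k H1 i j‖ + ‖Complex.I * TopIter cp cA k H2 i j‖ := norm_add_le _ _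
      _ = ‖TopIter cp cA k H1 i j‖ + ‖TopIter cp cA k H2 i j‖ := by
          rw [norm_mul, Complex.norm_I, one_mul]
      _ ≤ C1 * α ^ k + C2 * α ^ k := add_le_add (hC1b k i j) (hC2b k i j)
      _ = (C1 + C2) * α ^ k := by ring
  -- column bounds for powers of B
  have hBsum : B = ∑ ι, ((p ι : ℝ) : ℂ) • (cmap (A ι) ⊗ₖ cmap (A ι)) := by
    rw [hB, hM]
    ext q r
    simp only [Matrix.map_apply, Matrix.sum_apply, Matrix.smul_apply, kroneckerMap_apply,
      smul_eq_mul, cmap, Complex.coe_algebraMap]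
    push_cast
    rfl
  have hBk : ∀ ab : Fin n × Fin n, ∃ C : ℝ, 0 ≤ C ∧ ∀ (k : ℕ) q, ‖(B ^ k) q ab‖ ≤ C * α ^ k := by
    intro ab
    obtain ⟨C, hC, hCb⟩ := harb (Matrix.single ab.1 ab.2 (1:ℂ))
    refine ⟨C, hC, fun k q => ?_⟩
    have hvecZ : (fun r : Fin n × Fin n => Matrix.single ab.1 ab.2 (1:ℂ) r.1 r.2)
        = Pi.single ab (1:ℂ) := by
      funext r
      rcases eq_or_ne r ab with h | h
      · simp [h, Matrix.single, Pi.single_apply]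
      · have : ¬(ab.1 = r.1 ∧ ab.2 = r.2) := by
          intro hcon
          exact h (Prod.ext hcon.1.symm hcon.2.symm)
        simp [Matrix.single, this, Pi.single_apply, h]
    have hcol : (B ^ k) q ab = ((B ^ k) *ᵥ Pi.single ab (1:ℂ)) q := by
      rw [Matrix.mulVec_single]
      simp
    rw [hcol, ← hvecZ, hBsum]
    rw [vec_iter]
    exact hCb k q.1 q.2
  -- conclusion via the eigenvector
  by_contra habs
  push_neg at habs
  obtain ⟨q0, hq0⟩ := Function.ne_iff.mp hv0
  simp only [Pi.zero_apply] at hq0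
  choose Cf hCf0 hCfb using hBk
  obtain ⟨D, hD⟩ : ∃ D : ℝ, D = ∑ q, Cf q * ‖v q‖ := ⟨_, rfl⟩
  have hDk : ∀ k : ℕ, ‖μ‖ ^ k * ‖v q0‖ ≤ D * α ^ k := by
    intro k
    have h1 : ((B ^ k) *ᵥ v) q0 = μ ^ k * v q0 := by
      rw [heigk k]
      simp
    have h2 : ‖((B ^ k) *ᵥ v) q0‖ = ‖μ‖ ^ k * ‖v q0‖ := by
      rw [h1, norm_mul, norm_pow]
    have h3 : ((B ^ k) *ᵥ v) q0 = ∑ q, (B ^ k) q0 q * v q := by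
      simp [Matrix.mulVec, dotProduct]
    have h4 : ‖((B ^ k) *ᵥ v) q0‖ ≤ D * α ^ k := by
      rw [h3, hD]
      calc ‖∑ q, (B ^ k) q0 q * v q‖ ≤ ∑ q, ‖(B ^ k) q0 q * v q‖ := norm_sum_le _ _
        _ ≤ ∑ q, (Cf q * ‖v q‖) * α ^ k := by
            refine Finset.sum_le_sum fun q _ => ?_
            rw [norm_mul]
            calc ‖(B ^ k) q0 q‖ * ‖v q‖ ≤ (Cf q * α ^ k) * ‖v q‖ :=
                  mul_le_mul_of_nonneg_right (hCfb q k q0) (norm_nonneg _)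
              _ = (Cf q * ‖v q‖) * α ^ k := by ring
        _ = (∑ q, Cf q * ‖v q‖) * α ^ k := (Finset.sum_mul _ _ _).symm
    rw [← h2]
    exact h4
  have hv0norm : 0 < ‖v q0‖ := norm_pos_iff.mpr hq0
  have hDnn : 0 ≤ D := hD ▸ Finset.sum_nonneg fun q _ =>
    mul_nonneg (hCf0 q) (norm_nonneg _)
  have htend : Filter.Tendsto (fun k : ℕ => D * α ^ k) Filter.atTop (nhds 0) := by
    have := (tendsto_pow_atTop_nhds_zero_of_lt_one hα0 hα1).const_mul D
    simpa using this
  obtain ⟨k, hk⟩ := (htend.eventually_lt_const hv0norm).exists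
  have h1k : 1 ≤ ‖μ‖ ^ k := one_le_pow₀ habs
  have : ‖v q0‖ ≤ ‖μ‖ ^ k * ‖v q0‖ := le_mul_of_one_le_left (norm_nonneg _) h1k
  linarith [hDk k]


section Gelfand

attribute [local instance] Matrix.linftyOpNormedRing Matrix.linftyOpNormedAlgebra

lemma entry_nnnorm_le {m : Type} [Fintype m] [DecidableEq m] (X : Matrix m m ℂ) (q q' : m) :
    ‖X q q'‖₊ ≤ ‖X‖₊ := by
  rw [Matrix.linfty_opNNNorm_def]
  calc ‖X q q'‖₊ ≤ ∑ j, ‖X q j‖₊ :=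
        Finset.single_le_sum (f := fun j => ‖X q j‖₊) (fun j _ => zero_le) (Finset.mem_univ q')
    _ ≤ _ := Finset.le_sup (f := fun i => ∑ j, ‖X i j‖₊) (Finset.mem_univ q)

lemma gelfand_bound {m : Type} [Fintype m] [DecidableEq m] [Nonempty m]
    (B : Matrix m m ℂ) (hρ : ∀ z ∈ spectrum ℂ B, ‖z‖ < 1) :
    ∃ r : ℝ, 0 ≤ r ∧ r < 1 ∧ ∀ᶠ k in Filter.atTop, ∀ q q', ‖(B ^ k) q q'‖ ≤ r ^ k := by
  haveI : Nontrivial (Matrix m m ℂ) := by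
    refine ⟨0, 1, fun h01 => ?_⟩
    obtain i := Classical.arbitrary m
    have := congrFun (congrFun h01 i) i
    simp [Matrix.one_apply] at this
  have h1 : spectralRadius ℂ B < 1 := by
    have h2 := spectrum.spectralRadius_lt_of_forall_lt B (r := 1) fun z hz => by
      have := hρ z hz
      exact_mod_cast this
    simpa using h2
  obtain ⟨c, hc1, hc2⟩ := exists_between h1
  have hctop : c ≠ ⊤ := ne_top_of_lt hc2
  set r : NNReal := c.toNNReal with hr
  have hcoe : (r : ENNReal) = c := ENNReal.coe_toNNReal hctop
  have hr1 : (r : ℝ) < 1 := by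
    have : (r : ENNReal) < 1 := hcoe ▸ hc2
    exact_mod_cast this
  have hev : ∀ᶠ k : ℕ in Filter.atTop, (‖B ^ k‖₊ : ENNReal) ^ (1 / (k:ℝ)) < c :=
    (spectrum.pow_nnnorm_pow_one_div_tendsto_nhds_spectralRadius B).eventually_lt_const hc1
  refine ⟨r, r.coe_nonneg, hr1, ?_⟩
  filter_upwards [hev, Filter.eventually_ge_atTop 1] with k hk hk1
  have hknz : (k : ℝ) ≠ 0 := by positivity
  have hnorm : (‖B ^ k‖₊ : ENNReal) ≤ c ^ k := by
    have h3 : ((‖B ^ k‖₊ : ENNReal) ^ (1/(k:ℝ))) ^ (k:ℝ) ≤ c ^ (k:ℝ) :=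
      ENNReal.rpow_le_rpow (le_of_lt hk) (Nat.cast_nonneg k)
    rw [← ENNReal.rpow_natCast c k]
    calc (‖B ^ k‖₊ : ENNReal) = ((‖B ^ k‖₊ : ENNReal) ^ (1/(k:ℝ))) ^ (k:ℝ) := by
          rw [← ENNReal.rpow_mul, one_div, inv_mul_cancel₀ hknz, ENNReal.rpow_one]
      _ ≤ c ^ (k:ℝ) := h3
  have hnorm2 : ‖B ^ k‖₊ ≤ r ^ k := by
    have : (‖B ^ k‖₊ : ENNReal) ≤ ((r ^ k : NNReal) : ENNReal) := by
      rw [ENNReal.coe_pow, hcoe]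
      exact hnorm
    exact_mod_cast this
  intro q q'
  calc ‖(B ^ k) q q'‖ = ((‖(B ^ k) q q'‖₊ : ℝ)) := rfl
    _ ≤ ((‖B ^ k‖₊ : ℝ)) := by exact_mod_cast entry_nnnorm_le (B ^ k) q q'
    _ ≤ (r : ℝ) ^ k := by exact_mod_cast hnorm2

end Gelfand

lemma bilin_expand (Z : Matrix (Fin n) (Fin n) ℝ) (x y : Fin n → ℝ) :
    x ⬝ᵥ Z *ᵥ y = ∑ i, ∑ j, x i * Z i j * y j := by
  simp only [dotProduct, mulVec, Finset.mul_sum]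
  exact Finset.sum_congr rfl fun i _ => Finset.sum_congr rfl fun j _ => (mul_assoc _ _ _).symm

lemma mat_eq_of_bilin {X Y : Matrix (Fin n) (Fin n) ℝ}
    (h : ∀ x y, x ⬝ᵥ X *ᵥ y = x ⬝ᵥ Y *ᵥ y) : X = Y := by
  ext i j
  have := h (Pi.single i 1) (Pi.single j 1)
  simpa [Matrix.mulVec_single, single_dotProduct] using this

theorem forward (hn : 0 < n) (p : Fin d → ℝ) (hp : ∀ ι, 0 < p ι)
    (A : Fin d → Matrix (Fin n) (Fin n) ℝ)
    (h : SchurStable (∑ ι, p ι • (A ι ⊗ₖ A ι)))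
    (S : Matrix (Fin n) (Fin n) ℝ) (hS : S.PosSemidef) :
    ∃ P : Matrix (Fin n) (Fin n) ℝ, P.PosDef ∧ (P - Top p A P - S).PosDef := by
  haveI : Nonempty (Fin n) := ⟨⟨0, hn⟩⟩
  set M := ∑ ι, p ι • (A ι ⊗ₖ A ι) with hM
  set B := M.map (algebraMap ℝ ℂ) with hB
  obtain ⟨r, hr0, hr1, hev⟩ := gelfand_bound B h
  have hBpow : ∀ k : ℕ, B ^ k = (M ^ k).map (algebraMap ℝ ℂ) := by
    intro k
    rw [hB, ← RingHom.mapMatrix_apply, ← RingHom.mapMatrix_apply, map_pow]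
  have hMent : ∀ᶠ k in Filter.atTop, ∀ q q' : Fin n × Fin n, |(M ^ k) q q'| ≤ r ^ k := by
    filter_upwards [hev] with k hk q q'
    have h2 := hk q q'
    rw [hBpow k] at h2
    rwa [Matrix.map_apply, Complex.coe_algebraMap, Complex.norm_real, Real.norm_eq_abs] at h2
  set Q : Matrix (Fin n) (Fin n) ℝ := S + 1 with hQdef
  have hQpd : Q.PosDef := Matrix.PosDef.posSemidef_add hS Matrix.PosDef.one
  set g : ℕ → Matrix (Fin n) (Fin n) ℝ := fun k => TopIter p A k Q with hg
  have hgpsd : ∀ k, (g k).PosSemidef :=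
    fun k => TopIter_psd_real p (fun ι => le_of_lt (hp ι)) A hQpd.posSemidef k
  have hgM : ∀ (k : ℕ) (q : Fin n × Fin n),
      g k q.1 q.2 = ((M ^ k) *ᵥ fun r : Fin n × Fin n => Q r.1 r.2) q :=
    fun k q => (vec_iter p A Q k q).symm
  obtain ⟨CQ, hCQ⟩ : ∃ CQ : ℝ, CQ = ∑ q : Fin n × Fin n, |Q q.1 q.2| := ⟨_, rfl⟩
  have hCQnn : 0 ≤ CQ := hCQ ▸ Finset.sum_nonneg fun q _ => abs_nonneg _
  have hgbd : ∀ᶠ k in Filter.atTop, ∀ i j, |g k i j| ≤ CQ * r ^ k := by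
    filter_upwards [hMent] with k hk i j
    have h1 := hgM k (i, j)
    rw [h1]
    calc |((M ^ k) *ᵥ fun r : Fin n × Fin n => Q r.1 r.2) (i, j)|
        = |∑ q : Fin n × Fin n, (M ^ k) (i,j) q * Q q.1 q.2| := by
          simp [Matrix.mulVec, dotProduct]
      _ ≤ ∑ q : Fin n × Fin n, |(M ^ k) (i,j) q * Q q.1 q.2| := Finset.abs_sum_le_sum_abs _ _
      _ ≤ ∑ q : Fin n × Fin n, r ^ k * |Q q.1 q.2| := by
          refine Finset.sum_le_sum fun q _ => ?_
          rw [abs_mul]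
          exact mul_le_mul_of_nonneg_right (hk (i,j) q) (abs_nonneg _)
      _ = CQ * r ^ k := by rw [← Finset.mul_sum, hCQ]; ring
  have hsum : ∀ i j, Summable fun k => g k i j := by
    intro i j
    refine Summable.of_norm_bounded_eventually_nat
      ((summable_geometric_of_lt_one hr0 hr1).mul_left CQ) ?_
    filter_upwards [hgbd] with k hk
    rw [Real.norm_eq_abs]
    exact hk i j
  set P : Matrix (Fin n) (Fin n) ℝ := Matrix.of fun i j => ∑' k, g k i j with hP
  have hHS : ∀ i j, HasSum (fun k => g k i j) (P i j) := fun i j => (hsum i j).hasSum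
  have hbil : ∀ x y, HasSum (fun k => x ⬝ᵥ g k *ᵥ y) (x ⬝ᵥ P *ᵥ y) := by
    intro x y
    have h1 : ∀ i j, HasSum (fun k => x i * g k i j * y j) (x i * P i j * y j) :=
      fun i j => ((hHS i j).mul_left (x i)).mul_right (y j)
    have h2 : ∀ i, HasSum (fun k => ∑ j, x i * g k i j * y j) (∑ j, x i * P i j * y j) :=
      fun i => hasSum_sum fun j _ => h1 i j
    have h3 : HasSum (fun k => ∑ i, ∑ j, x i * g k i j * y j) (∑ i, ∑ j, x i * P i j * y j) :=
      hasSum_sum fun i _ => h2 i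
    simpa only [bilin_expand] using h3
  have hgsym : ∀ k i j, g k j i = g k i j := by
    intro k i j
    have := congrFun (congrFun (hgpsd k).1 i) j
    simpa [Matrix.conjTranspose_apply] using this
  have hherm : P.IsHermitian := by
    unfold Matrix.IsHermitian
    ext i j
    rw [Matrix.conjTranspose_apply]
    show star (P j i) = P i j
    rw [star_trivial]
    show ∑' k, g k j i = ∑' k, g k i j
    exact tsum_congr fun k => hgsym k i j
  have hPpd : P.PosDef := by
    refine Matrix.PosDef.of_dotProduct_mulVec_pos hherm fun x hx => ?_
    rw [star_trivial]
    have h0 : 0 < x ⬝ᵥ Q *ᵥ x := by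
      have := hQpd.dotProduct_mulVec_pos hx
      simpa using this
    have hle : x ⬝ᵥ g 0 *ᵥ x ≤ x ⬝ᵥ P *ᵥ x := by
      rw [← (hbil x x).tsum_eq]
      refine Summable.le_tsum (hbil x x).summable 0 fun k _ => ?_
      have := (hgpsd k).dotProduct_mulVec_nonneg x
      simpa using this
    have hg0 : g 0 = Q := rfl
    rw [hg0] at hle
    exact lt_of_lt_of_le h0 hle
  have hTop : ∀ x y, HasSum (fun k => x ⬝ᵥ g (k+1) *ᵥ y) (x ⬝ᵥ (Top p A P) *ᵥ y) := by
    intro x y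
    have hsucc : ∀ k, g (k+1) = Top p A (g k) := fun k => rfl
    simp only [hsucc, bilin_Top]
    exact hasSum_sum fun ι _ => (hbil ((A ι)ᵀ *ᵥ x) ((A ι)ᵀ *ᵥ y)).mul_left (p ι)
  have hlyap : P - Top p A P = Q := by
    apply mat_eq_of_bilin
    intro x y
    rw [Matrix.sub_mulVec, dotProduct_sub]
    have h1 : x ⬝ᵥ P *ᵥ y = ∑' k, x ⬝ᵥ g k *ᵥ y := (hbil x y).tsum_eq.symm
    have h2 : x ⬝ᵥ (Top p A P) *ᵥ y = ∑' k, x ⬝ᵥ g (k+1) *ᵥ y := (hTop x y).tsum_eq.symm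
    have h3 : ∑' k, x ⬝ᵥ g k *ᵥ y = x ⬝ᵥ g 0 *ᵥ y + ∑' k, x ⬝ᵥ g (k+1) *ᵥ y :=
      Summable.tsum_eq_zero_add (hbil x y).summable
    rw [h1, h2, h3]
    show _ = x ⬝ᵥ Q *ᵥ y
    have hg0 : g 0 = Q := rfl
    rw [hg0]
    ring
  refine ⟨P, hPpd, ?_⟩
  rw [hlyap, hQdef]
  have : S + 1 - S = (1 : Matrix (Fin n) (Fin n) ℝ) := by
    ext i j; simp
  rw [this]
  exact Matrix.PosDef.one

end SchurAux

theorem stmt1 (d n : ℕ) (hd : 0 < d) (hn : 0 < n)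
    (p : Fin d → ℝ) (hp : ∀ i, 0 < p i)
    (A : Fin d → Matrix (Fin n) (Fin n) ℝ) :
    (SchurStable (∑ i, p i • (A i ⊗ₖ A i)) ↔
      ∃ P : Matrix (Fin n) (Fin n) ℝ, P.PosDef ∧
        (P - ∑ i, p i • (A i * P * (A i)ᵀ)).PosDef) ∧
    (SchurStable (∑ i, p i • (A i ⊗ₖ A i)) →
      ∀ S : Matrix (Fin n) (Fin n) ℝ, S.PosSemidef →
        ∃ P : Matrix (Fin n) (Fin n) ℝ, P.PosDef ∧
          (P - ∑ i, p i • (A i * P * (A i)ᵀ) - S).PosDef) := by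

  constructor
  · constructor
    · intro h
      obtain ⟨P, h1, h2⟩ := SchurAux.forward hn p hp A h 0 Matrix.PosSemidef.zero
      refine ⟨P, h1, ?_⟩
      have h3 : P - SchurAux.Top p A P - 0 = P - ∑ i, p i • (A i * P * (A i)ᵀ) := by
        rw [sub_zero]; rfl
      rwa [h3] at h2
    · rintro ⟨P, h1, h2⟩
      exact SchurAux.backward p hp A P h1 h2
  · intro h S hS
    obtain ⟨P, h1, h2⟩ := SchurAux.forward hn p hp A h S hS
    exact ⟨P, h1, h2⟩
end

section
/- Let d, m, n be positive integers, p_1,…,p_d > 0, and for each i let F_i ∈ ℝ^{m×m}, A_i ∈ ℝ^{n×n}, B_i ∈ ℝ^{m×n}; set F̃_i = [[F_i, B_i],[0, A_i]]. Suppose P₂ ∈ ℝ^{n×n} is symmetric positive definite and Q₂ := P₂ − Σ_{i=1}^d p_i A_i P₂ A_iᵀ is positive definite. Define D := Σ_{i=1}^d p_i B_i P₂ A_iᵀ and S := Σ_{i=1}^d p_i B_i P₂ B_iᵀ + D Q₂^{−1} Dᵀ. If P₁ ∈ ℝ^{m×m} is symmetric positive definite and P₁ − Σ_{i=1}^d p_i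 F_i P₁ F_iᵀ − S is positive definite, then the block diagonal matrix P = diag(P₁, P₂) satisfies that P − Σ_{i=1}^d p_i F̃_i P F̃_iᵀ is positive definite. -/
open Matrix

section helpers
variable {l k : Type*} [Fintype l] [Fintype k] [DecidableEq k]

lemma sum_fromBlocks {ι α m' n' l' o' : Type*} [AddCommMonoid α] (s : Finset ι)
    (A : ι → Matrix m' l' α) (B : ι → Matrix m' n' α) (C : ι → Matrix o' l' α)
    (D : ι → Matrix o' n' α) :
    ∑ i ∈ s, fromBlocks (A i) (B i) (C i) (D i) =
      fromBlocks (∑ i ∈ s, A i) (∑ i ∈ s, B i) (∑ i ∈ s, C i) (∑ i ∈ s, D i) := by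
  ext (i | i) (j | j) <;> simp [Matrix.sum_apply]

lemma fromBlocks_sub' {α m' n' l' o' : Type*} [SubtractionMonoid α]
    (A A' : Matrix m' l' α) (B B' : Matrix m' n' α) (C C' : Matrix o' l' α)
    (D D' : Matrix o' n' α) :
    fromBlocks A B C D - fromBlocks A' B' C' D' =
      fromBlocks (A - A') (B - B') (C - C') (D - D') := by
  ext (i | i) (j | j) <;> simp

lemma posDef_fromBlocks₂₂ {A : Matrix l l ℝ} (B : Matrix l k ℝ) {D : Matrix k k ℝ}
    (hD : D.PosDef) (hS : (A - B * D⁻¹ * Bᴴ).PosDef) :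
    (fromBlocks A B Bᴴ D).PosDef := by
  haveI := hD.isUnit.invertible
  refine PosDef.of_dotProduct_mulVec_pos ?_ ?_
  · rw [IsHermitian.fromBlocks₂₂ _ _ hD.1]
    exact hS.1
  · intro x hx
    have hxd : x = (x ∘ Sum.inl) ⊕ᵥ (x ∘ Sum.inr) := (Sum.elim_comp_inl_inr x).symm
    rw [dotProduct_mulVec, hxd, schur_complement_eq₂₂ A B _ _ hD.1]
    by_cases hu : x ∘ Sum.inl = 0
    · have hv : x ∘ Sum.inr ≠ 0 := by
        intro hv
        apply hx
        funext i
        cases i with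
        | inl i => exact congrFun hu i
        | inr i => exact congrFun hv i
      rw [hu]
      simp only [mulVec_zero, zero_add, star_zero, zero_vecMul, zero_dotProduct, add_zero]
      rw [← dotProduct_mulVec]
      exact hD.dotProduct_mulVec_pos hv
    · have h1 : 0 ≤ star ((D⁻¹ * Bᴴ) *ᵥ (x ∘ Sum.inl) + x ∘ Sum.inr) ᵥ* D ⬝ᵥ
          ((D⁻¹ * Bᴴ) *ᵥ (x ∘ Sum.inl) + x ∘ Sum.inr) := by
        rw [← dotProduct_mulVec]
        exact hD.posSemidef.dotProduct_mulVec_nonneg _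
      have h2 : 0 < star (x ∘ Sum.inl) ᵥ* (A - B * D⁻¹ * Bᴴ) ⬝ᵥ (x ∘ Sum.inl) := by
        rw [← dotProduct_mulVec]
        exact hS.dotProduct_mulVec_pos hu
      linarith
end helpers

theorem stmt2 (d m n : ℕ) (hd : 0 < d) (hm : 0 < m) (hn : 0 < n)
    (p : Fin d → ℝ) (hp : ∀ i, 0 < p i)
    (F : Fin d → Matrix (Fin m) (Fin m) ℝ)
    (A : Fin d → Matrix (Fin n) (Fin n) ℝ)
    (B : Fin d → Matrix (Fin m) (Fin n) ℝ)
    (P₁ : Matrix (Fin m) (Fin m) ℝ) (P₂ : Matrix (Fin n) (Fin n) ℝ)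
    (hP₂ : P₂.PosDef)
    (hQ₂ : (P₂ - ∑ i, p i • (A i * P₂ * (A i)ᵀ)).PosDef)
    (hP₁ : P₁.PosDef)
    (hP₁S : (P₁ - ∑ i, p i • (F i * P₁ * (F i)ᵀ) -
        ((∑ i, p i • (B i * P₂ * (B i)ᵀ)) +
          (∑ i, p i • (B i * P₂ * (A i)ᵀ)) *
            (P₂ - ∑ i, p i • (A i * P₂ * (A i)ᵀ))⁻¹ *
            (∑ i, p i • (B i * P₂ * (A i)ᵀ))ᵀ)).PosDef) :
    (Matrix.fromBlocks P₁ 0 0 P₂ -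
      ∑ i, p i • (Matrix.fromBlocks (F i) (B i) 0 (A i) *
        Matrix.fromBlocks P₁ 0 0 P₂ *
        (Matrix.fromBlocks (F i) (B i) 0 (A i))ᵀ)).PosDef := by
  have hP₂sym : P₂ᵀ = P₂ := by
    rw [← conjTranspose_eq_transpose_of_trivial]; exact hP₂.1
  set D : Matrix (Fin m) (Fin n) ℝ := ∑ i, p i • (B i * P₂ * (A i)ᵀ) with hD
  have blocks : ∀ i : Fin d,
      p i • (Matrix.fromBlocks (F i) (B i) 0 (A i) * Matrix.fromBlocks P₁ 0 0 P₂ *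
        (Matrix.fromBlocks (F i) (B i) 0 (A i))ᵀ) =
      fromBlocks (p i • (F i * P₁ * (F i)ᵀ + B i * P₂ * (B i)ᵀ))
        (p i • (B i * P₂ * (A i)ᵀ)) (p i • (A i * P₂ * (B i)ᵀ))
        (p i • (A i * P₂ * (A i)ᵀ)) := by
    intro i
    rw [fromBlocks_transpose, transpose_zero, fromBlocks_multiply, fromBlocks_multiply,
      fromBlocks_smul]
    congr 1 <;> simp [Matrix.mul_assoc]
  have hDT : Dᵀ = ∑ i, p i • (A i * P₂ * (B i)ᵀ) := by
    rw [hD, transpose_sum]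
    refine Finset.sum_congr rfl fun i _ => ?_
    rw [transpose_smul, transpose_mul, transpose_mul, transpose_transpose, hP₂sym,
      Matrix.mul_assoc]
  have key : (Matrix.fromBlocks P₁ 0 0 P₂ -
      ∑ i, p i • (Matrix.fromBlocks (F i) (B i) 0 (A i) *
        Matrix.fromBlocks P₁ 0 0 P₂ *
        (Matrix.fromBlocks (F i) (B i) 0 (A i))ᵀ)) =
      fromBlocks
        (P₁ - (∑ i, p i • (F i * P₁ * (F i)ᵀ) + ∑ i, p i • (B i * P₂ * (B i)ᵀ)))
        (-D) (-D)ᴴ (P₂ - ∑ i, p i • (A i * P₂ * (A i)ᵀ)) := by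
    simp_rw [blocks]
    rw [sum_fromBlocks, fromBlocks_sub']
    have e1 : (∑ x, p x • (F x * P₁ * (F x)ᵀ + B x * P₂ * (B x)ᵀ)) =
        ∑ i, p i • (F i * P₁ * (F i)ᵀ) + ∑ i, p i • (B i * P₂ * (B i)ᵀ) := by
      simp_rw [smul_add]
      rw [Finset.sum_add_distrib]
    rw [e1, zero_sub, zero_sub, conjTranspose_neg, conjTranspose_eq_transpose_of_trivial, hDT]
  rw [key]
  apply posDef_fromBlocks₂₂ _ hQ₂
  have hneg : (-D) * (P₂ - ∑ i, p i • (A i * P₂ * (A i)ᵀ))⁻¹ * (-D)ᴴ =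
      D * (P₂ - ∑ i, p i • (A i * P₂ * (A i)ᵀ))⁻¹ * Dᵀ := by
    rw [conjTranspose_neg, conjTranspose_eq_transpose_of_trivial, Matrix.neg_mul,
      Matrix.neg_mul, Matrix.mul_neg, neg_neg]
  rw [hneg]
  have : P₁ - (∑ i, p i • (F i * P₁ * (F i)ᵀ) + ∑ i, p i • (B i * P₂ * (B i)ᵀ)) -
      D * (P₂ - ∑ i, p i • (A i * P₂ * (A i)ᵀ))⁻¹ * Dᵀ =
      P₁ - ∑ i, p i • (F i * P₁ * (F i)ᵀ) -
        ((∑ i, p i • (B i * P₂ * (B i)ᵀ)) +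
          D * (P₂ - ∑ i, p i • (A i * P₂ * (A i)ᵀ))⁻¹ * Dᵀ) := by
    abel
  rw [this]
  exact hP₁S
end

section
/- Let d, m be positive integers, F_1,…,F_d ∈ ℝ^{m×m}, and p_1,…,p_d ≥ 0. If Σ_{i=1}^d p_i (F_i ⊗ F_i) is Schur stable, then the family (p_w ‖F_w‖_F²)_{w ∈ Σ*} is summable, i.e. Σ_{w ∈ Σ*} p_w ‖F_w‖_F² < ∞, where ‖·‖_F is the Frobenius norm and the sum ranges over all words over Σ = {1,…,d}. -/
open Matrix Filter
open scoped Kronecker NNReal ENNReal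

/-- Word product `M_w = M_{σ_k} ⋯ M_{σ_1}` for a word `w = σ_1 ⋯ σ_k`,
represented as a list `[σ_1, …, σ_k]`; `M_ε = 1`. -/
noncomputable def wordProd {d : ℕ} {ι : Type} [Fintype ι] [DecidableEq ι]
    (A : Fin d → Matrix ι ι ℝ) : List (Fin d) → Matrix ι ι ℝ
  | [] => 1
  | σ :: s => wordProd A s * A σ

/-- `p_w = p_{σ_1} ⋯ p_{σ_k}` for a word `w = σ_1 ⋯ σ_k`; `p_ε = 1`. -/
def wordP {d : ℕ} (p : Fin d → ℝ) (w : List (Fin d)) : ℝ := (w.map p).prod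

attribute [local instance] Matrix.linftyOpNormedAddCommGroup Matrix.linftyOpNormedRing
  Matrix.linftyOpNormedAlgebra

lemma aux_entry_le {ι : Type} [Fintype ι] (A : Matrix ι ι ℂ) (i j : ι) : ‖A i j‖ ≤ ‖A‖ := by
  have h1 : ‖A i j‖₊ ≤ ∑ j' : ι, ‖A i j'‖₊ :=
    Finset.single_le_sum (f := fun j' => ‖A i j'‖₊) (fun _ _ => zero_le) (Finset.mem_univ j)
  have h2 : (∑ j' : ι, ‖A i j'‖₊) ≤ (Finset.univ : Finset ι).sup fun i' : ι => ∑ j' : ι, ‖A i' j'‖₊ :=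
    Finset.le_sup (f := fun i' : ι => ∑ j' : ι, ‖A i' j'‖₊) (Finset.mem_univ i)
  have h := h1.trans h2
  rw [Matrix.linfty_opNorm_def]
  exact_mod_cast h

lemma aux_summable_pow {ι : Type} [Fintype ι] [DecidableEq ι]
    (M : Matrix ι ι ℂ) (h : ∀ μ ∈ spectrum ℂ M, ‖μ‖ < 1) :
    Summable fun k : ℕ => ‖M ^ k‖ := by
  haveI : CompleteSpace (Matrix ι ι ℂ) := FiniteDimensional.complete ℂ _
  have hρ : spectralRadius ℂ M < 1 := by
    obtain ⟨c, hc1, hc⟩ : ∃ c : ℝ≥0, c < 1 ∧ ∀ μ ∈ spectrum ℂ M, ‖μ‖₊ ≤ c := by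
      rcases (spectrum ℂ M).eq_empty_or_nonempty with he | hne
      · exact ⟨0, by norm_num, by simp [he]⟩
      · obtain ⟨μ0, hμ0, hmax⟩ :=
          Set.exists_max_image (spectrum ℂ M) (fun μ => ‖μ‖₊) (Matrix.finite_spectrum M) hne
        refine ⟨‖μ0‖₊, ?_, hmax⟩
        have := h μ0 hμ0
        rwa [← Real.toNNReal_one, ← norm_toNNReal, Real.toNNReal_lt_toNNReal_iff one_pos]
    calc spectralRadius ℂ M ≤ (c : ℝ≥0∞) := iSup₂_le fun μ hμ => by exact_mod_cast hc μ hμ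
      _ < 1 := by exact_mod_cast hc1
  obtain ⟨r, hρr, hr1⟩ := ENNReal.lt_iff_exists_nnreal_btwn.mp hρ
  have hr1' : (r : ℝ) < 1 := by exact_mod_cast hr1
  have hgel := spectrum.pow_nnnorm_pow_one_div_tendsto_nhds_spectralRadius M
  have hev : ∀ᶠ k : ℕ in atTop, ((‖M ^ k‖₊ : ℝ≥0∞) ^ (1 / (k : ℝ))) < (r : ℝ≥0∞) :=
    hgel.eventually_lt_const hρr
  obtain ⟨N, hN⟩ := (hev.and (eventually_ge_atTop 1)).exists_forall_of_atTop
  have hbound : ∀ n : ℕ, ‖M ^ (n + N + 1)‖ ≤ (r : ℝ) ^ (n + N + 1) := by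
    intro n
    set k := n + N + 1 with hk
    have hkN : N ≤ k := by omega
    obtain ⟨hlt, hk1⟩ := hN k hkN
    have hk0 : (k : ℝ) ≠ 0 := by positivity
    have hx : (‖M ^ k‖₊ : ℝ≥0∞) = ((‖M ^ k‖₊ : ℝ≥0∞) ^ (1 / (k : ℝ))) ^ (k : ℝ) := by
      rw [← ENNReal.rpow_mul, one_div_mul_cancel hk0, ENNReal.rpow_one]
    have hle : (‖M ^ k‖₊ : ℝ≥0∞) ≤ (r : ℝ≥0∞) ^ (k : ℝ) := by
      rw [hx]
      exact ENNReal.rpow_le_rpow hlt.le (by positivity)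
    rw [ENNReal.rpow_natCast, ← ENNReal.coe_pow, ENNReal.coe_le_coe] at hle
    exact_mod_cast hle
  rw [← summable_nat_add_iff (N + 1)]
  refine Summable.of_nonneg_of_le (fun n => norm_nonneg _) (fun n => by
      simpa [add_assoc] using hbound n) ?_
  have : Summable fun n : ℕ => (r : ℝ) ^ n * (r : ℝ) ^ (N + 1) :=
    (summable_geometric_of_lt_one r.coe_nonneg hr1').mul_right _
  refine this.congr fun n => ?_
  rw [← pow_add]

lemma aux_wordP_nonneg {d : ℕ} (p : Fin d → ℝ) (hp : ∀ i, 0 ≤ p i) (w : List (Fin d)) :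
    0 ≤ wordP p w := by
  apply List.prod_nonneg
  intro a ha
  obtain ⟨i, _, rfl⟩ := List.mem_map.mp ha
  exact hp i

theorem stmt4 (d m : ℕ) (hd : 0 < d) (hm : 0 < m)
    (F : Fin d → Matrix (Fin m) (Fin m) ℝ)
    (p : Fin d → ℝ) (hp : ∀ i, 0 ≤ p i)
    (hF : SchurStable (∑ i, p i • (F i ⊗ₖ F i))) :
    Summable (fun w : List (Fin d) =>
      wordP p w * ∑ a, ∑ b, (wordProd F w a b) ^ 2) := by
  set S : Matrix (Fin m × Fin m) (Fin m × Fin m) ℝ := ∑ i, p i • (F i ⊗ₖ F i) with hSdef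
  -- Step 1: word sum identity
  have key : ∀ n : ℕ,
      (∑ v : Fin n → Fin d, wordP p (List.ofFn v) •
        (wordProd F (List.ofFn v) ⊗ₖ wordProd F (List.ofFn v))) = S ^ n := by
    intro n
    induction n with
    | zero => simp [wordP, wordProd, Matrix.one_kronecker_one]
    | succ n ih =>
      rw [pow_succ, ← ih]
      rw [← Fintype.sum_equiv (Fin.consEquiv (fun _ : Fin (n + 1) => Fin d))
        (fun q : Fin d × (Fin n → Fin d) =>
          wordP p (List.ofFn (Fin.cons q.1 q.2)) •
            (wordProd F (List.ofFn (Fin.cons q.1 q.2)) ⊗ₖ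
              wordProd F (List.ofFn (Fin.cons q.1 q.2))))
        _ (fun q => by rfl)]
      have hofn : ∀ (σ : Fin d) (s : Fin n → Fin d),
          List.ofFn (Fin.cons σ s) = σ :: List.ofFn s := by
        intro σ s
        rw [List.ofFn_succ]
        simp
      rw [Fintype.sum_prod_type]
      have hterm : ∀ (σ : Fin d) (s : Fin n → Fin d),
          wordP p (List.ofFn (Fin.cons σ s)) •
            (wordProd F (List.ofFn (Fin.cons σ s)) ⊗ₖ
              wordProd F (List.ofFn (Fin.cons σ s)))
          = (wordP p (List.ofFn s) • (wordProd F (List.ofFn s) ⊗ₖ wordProd F (List.ofFn s)))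
              * (p σ • (F σ ⊗ₖ F σ)) := by
        intro σ s
        rw [hofn σ s]
        show (p σ * wordP p (List.ofFn s)) •
            ((wordProd F (List.ofFn s) * F σ) ⊗ₖ (wordProd F (List.ofFn s) * F σ)) = _
        rw [Matrix.mul_kronecker_mul, Matrix.smul_mul, Matrix.mul_smul, mul_smul, smul_comm]
      calc (∑ σ : Fin d, ∑ s : Fin n → Fin d, wordP p (List.ofFn (Fin.cons σ s)) •
            (wordProd F (List.ofFn (Fin.cons σ s)) ⊗ₖ wordProd F (List.ofFn (Fin.cons σ s))))
          = ∑ σ : Fin d, ∑ s : Fin n → Fin d,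
              (wordP p (List.ofFn s) • (wordProd F (List.ofFn s) ⊗ₖ wordProd F (List.ofFn s)))
                * (p σ • (F σ ⊗ₖ F σ)) := by
            exact Finset.sum_congr rfl fun σ _ => Finset.sum_congr rfl fun s _ => hterm σ s
        _ = ∑ σ : Fin d, (∑ s : Fin n → Fin d,
              wordP p (List.ofFn s) • (wordProd F (List.ofFn s) ⊗ₖ wordProd F (List.ofFn s)))
                * (p σ • (F σ ⊗ₖ F σ)) := by
            exact Finset.sum_congr rfl fun σ _ => (Finset.sum_mul _ _ _).symm
        _ = (∑ s : Fin n → Fin d,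
              wordP p (List.ofFn s) • (wordProd F (List.ofFn s) ⊗ₖ wordProd F (List.ofFn s)))
                * S := by rw [← Finset.mul_sum]
  -- scalar version
  set t : ℕ → ℝ := fun n => ∑ v : Fin n → Fin d,
    wordP p (List.ofFn v) * ∑ a, ∑ b, (wordProd F (List.ofFn v) a b) ^ 2 with htdef
  have ht : ∀ n : ℕ, t n = ∑ a : Fin m, ∑ b : Fin m, (S ^ n) (a, a) (b, b) := by
    intro n
    conv_rhs => rw [← key n]
    simp only [Matrix.sum_apply, Matrix.smul_apply, Matrix.kroneckerMap_apply,
      smul_eq_mul]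
    rw [htdef]
    simp only [Finset.mul_sum, sq]
    rw [Finset.sum_comm]
    exact Finset.sum_congr rfl fun a _ => Finset.sum_comm
  -- complex matrix
  set T : Matrix (Fin m × Fin m) (Fin m × Fin m) ℂ := S.map (algebraMap ℝ ℂ) with hTdef
  have hsumT : Summable fun k : ℕ => ‖T ^ k‖ := aux_summable_pow T hF
  have hTk : ∀ k : ℕ, T ^ k = (S ^ k).map (algebraMap ℝ ℂ) := by
    intro k
    have := map_pow ((algebraMap ℝ ℂ).mapMatrix) S k
    rw [hTdef]
    simpa [RingHom.mapMatrix_apply] using this.symm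
  have ht_nonneg : ∀ n, 0 ≤ t n := by
    intro n
    apply Finset.sum_nonneg
    intro v _
    apply mul_nonneg (aux_wordP_nonneg p hp _)
    apply Finset.sum_nonneg; intro a _
    apply Finset.sum_nonneg; intro b _
    positivity
  have hbound : ∀ n : ℕ, t n ≤ (m : ℝ) ^ 2 * ‖T ^ n‖ := by
    intro n
    rw [ht n]
    have hentry : ∀ a b : Fin m, (S ^ n) (a, a) (b, b) ≤ ‖T ^ n‖ := by
      intro a b
      have h1 : (S ^ n) (a, a) (b, b) ≤ |(S ^ n) (a, a) (b, b)| := le_abs_self _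
      have h2 : |(S ^ n) (a, a) (b, b)| = ‖(T ^ n) (a, a) (b, b)‖ := by
        rw [hTk n, Matrix.map_apply, norm_algebraMap']
        rfl
      calc (S ^ n) (a, a) (b, b) ≤ |(S ^ n) (a, a) (b, b)| := h1
        _ = ‖(T ^ n) (a, a) (b, b)‖ := h2
        _ ≤ ‖T ^ n‖ := aux_entry_le _ _ _
    calc (∑ a : Fin m, ∑ b : Fin m, (S ^ n) (a, a) (b, b))
        ≤ ∑ _a : Fin m, ∑ _b : Fin m, ‖T ^ n‖ :=
          Finset.sum_le_sum fun a _ => Finset.sum_le_sum fun b _ => hentry a b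
      _ = (m : ℝ) ^ 2 * ‖T ^ n‖ := by
          simp [Finset.sum_const, Finset.card_univ]; ring
  have hsumt : Summable t :=
    Summable.of_nonneg_of_le ht_nonneg hbound (hsumT.mul_left _)
  -- transport along the sigma equivalence
  set f : List (Fin d) → ℝ := fun w => wordP p w * ∑ a, ∑ b, (wordProd F w a b) ^ 2 with hfdef
  have hsig : Summable (f ∘ (List.equivSigmaTuple (α := Fin d)).symm) := by
    apply (summable_sigma_of_nonneg ?_).mpr
    · constructor
      · intro n
        exact Summable.of_finite
      · refine hsumt.congr fun n => ?_
        rw [tsum_fintype]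
        rfl
    · intro x
      apply mul_nonneg (aux_wordP_nonneg p hp _)
      apply Finset.sum_nonneg; intro a _
      apply Finset.sum_nonneg; intro b _
      positivity
  exact ((List.equivSigmaTuple (α := Fin d)).symm.summable_iff).mp hsig
end

section
/- Let (Ω, ℱ, ℙ) be a probability space, d, n positive integers, p_1,…,p_d ≥ 0, and F_1,…,F_d ∈ ℝ^{n×n} such that Σ_{i=1}^d p_i (F_i ⊗ F_i) is Schur stable. Let e(0) : Ω → ℝⁿ be square integrable, and for each t ∈ ℕ let μ(t) = (μ_1(t),…,μ_d(t)) : Ω → ℝ^d have square-integrable components, be independent of the σ-algebra generated by e(0), μ(0), …, μ(t−1), and satisfy E[μ_i(t) μ_j(t)] = p_i if i = j and 0 if i ≠ j. Define recursively e(t+1) = Σ_{i=1}^d F_i e(t) μ_i(t). Then for every t ∈ ℕ the random vector e(t) is square integrable, E[e(t+1) e(t+1)ᵀ] = Σ_{i=1}^d p_i F_i E[e(t) e(t)ᵀ] F_iᵀ, and lim_{t→∞} E[‖e(t)‖²] = 0. -/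
open Matrix MeasureTheory Filter
open scoped Kronecker

section Spectral

attribute [local instance] Matrix.linftyOpNormedRing Matrix.linftyOpNormedAlgebra

lemma aux_norm_pow_tendsto {ι : Type} [Fintype ι] [DecidableEq ι] [Nonempty ι]
    (A : Matrix ι ι ℂ) (h : ∀ z ∈ spectrum ℂ A, ‖z‖ < 1) :
    Tendsto (fun k => ‖A ^ k‖) atTop (nhds 0) := by
  have hsr : spectralRadius ℂ A < 1 := by
    have := spectrum.spectralRadius_lt_of_forall_lt A (r := 1) (fun z hz => by
      exact NNReal.coe_lt_coe.mp (by simpa using (h z hz)))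
    simpa using this
  have hg := spectrum.pow_nnnorm_pow_one_div_tendsto_nhds_spectralRadius A
  obtain ⟨c, hc1, hc2⟩ := exists_between hsr
  have hcne : c ≠ ⊤ := (hc2.trans_le le_top).ne
  have hev : ∀ᶠ k : ℕ in atTop, (‖A ^ k‖₊ : ENNReal) ^ ((1:ℝ) / (k:ℝ)) < c :=
    hg.eventually_lt_const hc1
  have hbound : ∀ᶠ k in atTop, ‖A ^ k‖ ≤ c.toReal ^ k := by
    filter_upwards [hev, eventually_ge_atTop 1] with k hk hk1
    have hkpos : (0:ℝ) < k := by exact_mod_cast hk1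
    have h1 : (‖A ^ k‖₊ : ENNReal) ≤ c ^ (k:ℝ) := by
      have := ENNReal.rpow_le_rpow hk.le (le_of_lt hkpos)
      rwa [← ENNReal.rpow_mul, one_div, inv_mul_cancel₀ hkpos.ne',
        ENNReal.rpow_one] at this
    have h2 : (‖A ^ k‖₊ : ENNReal) ≤ c ^ k := by
      rwa [ENNReal.rpow_natCast] at h1
    have := ENNReal.toReal_le_toReal (by simp) (by simp [ENNReal.pow_ne_top hcne]) |>.mpr h2
    simpa [ENNReal.toReal_pow] using this
  have hrlt : c.toReal < 1 := by
    have := ENNReal.toReal_lt_toReal hcne (by simp) |>.mpr hc2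
    simpa using this
  have hc0 : (0:ℝ) ≤ c.toReal := ENNReal.toReal_nonneg
  have hpow : Tendsto (fun k : ℕ => c.toReal ^ k) atTop (nhds 0) :=
    tendsto_pow_atTop_nhds_zero_of_lt_one hc0 hrlt
  exact squeeze_zero' (Eventually.of_forall fun k => norm_nonneg _) hbound hpow

lemma aux_entry_tendsto {ι : Type} [Fintype ι] [DecidableEq ι] [Nonempty ι]
    (M : Matrix ι ι ℝ) (h : SchurStable M) (q r : ι) :
    Tendsto (fun k => (M ^ k) q r) atTop (nhds 0) := by
  set A := M.map (algebraMap ℝ ℂ) with hA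
  have hmap : ∀ k, (M ^ k).map (algebraMap ℝ ℂ) = A ^ k := by
    intro k
    simpa [RingHom.mapMatrix_apply, hA] using map_pow (RingHom.mapMatrix (algebraMap ℝ ℂ)) M k
  have hnorm := aux_norm_pow_tendsto A h
  have hb : ∀ k, |(M ^ k) q r| ≤ ‖A ^ k‖ := by
    intro k
    have h1 : ‖(A ^ k) q r‖₊ ≤ ‖A ^ k‖₊ := by
      rw [Matrix.linfty_opNNNorm_def]
      calc ‖(A ^ k) q r‖₊ ≤ ∑ j, ‖(A ^ k) q j‖₊ :=
            Finset.single_le_sum (f := fun j => ‖(A ^ k) q j‖₊) (fun j _ => zero_le)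
              (Finset.mem_univ r)
        _ ≤ _ := Finset.le_sup (f := fun i => ∑ j, ‖(A ^ k) i j‖₊) (Finset.mem_univ q)
    have h1 : ‖(A ^ k) q r‖ ≤ ‖A ^ k‖ := h1
    have h2 : (A ^ k) q r = ((M ^ k) q r : ℂ) := by
      rw [← hmap k]; rfl
    rw [h2] at h1
    simpa using h1
  have := squeeze_zero' (Eventually.of_forall fun k => abs_nonneg _)
    (Eventually.of_forall hb) hnorm
  exact tendsto_zero_iff_abs_tendsto_zero _ |>.mpr this

end Spectral

section Helpers

variable {Ω : Type} [MeasurableSpace Ω] {ℙ : Measure Ω}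

lemma aux_indep_mono {m1 m2 m1' m2' : MeasurableSpace Ω}
    (h : ProbabilityTheory.Indep m1 m2 ℙ) (h1 : m1' ≤ m1) (h2 : m2' ≤ m2) :
    ProbabilityTheory.Indep m1' m2' ℙ :=
  fun s t hs ht => h s t (h1 _ hs) (h2 _ ht)

lemma aux_L2_mul_integrable {f g : Ω → ℝ} (hf : MemLp f 2 ℙ) (hg : MemLp g 2 ℙ) :
    Integrable (fun ω => f ω * g ω) ℙ := by
  have h : MemLp (g • f) 1 ℙ := hf.smul hg (r := 1) (hpqr := ⟨by simp [one_div, ENNReal.inv_two_add_inv_two]⟩)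
  rw [memLp_one_iff_integrable] at h
  exact (by simpa [Pi.smul_apply, smul_eq_mul, mul_comm] using h : Integrable (f * g) ℙ)

lemma aux_step_meas {m : MeasurableSpace Ω} {d n : ℕ}
    (F : Fin d → Matrix (Fin n) (Fin n) ℝ) {f : Ω → Fin d → ℝ} {g : Ω → Fin n → ℝ}
    (hf : Measurable[m] f) (hg : Measurable[m] g) :
    Measurable[m] (fun ω => ∑ i, f ω i • (F i).mulVec (g ω)) := by
  apply measurable_pi_lambda
  intro a
  simp only [Finset.sum_apply, Pi.smul_apply, smul_eq_mul, Matrix.mulVec, dotProduct]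
  exact Finset.measurable_sum _ fun i _ =>
    ((measurable_pi_apply i).comp hf).mul
      (Finset.measurable_sum _ fun c _ => ((measurable_pi_apply c).comp hg).const_mul _)

end Helpers
theorem stmt6 {Ω : Type} [MeasurableSpace Ω] (ℙ : Measure Ω) [IsProbabilityMeasure ℙ]
    (d n : ℕ) (hd : 0 < d) (hn : 0 < n)
    (p : Fin d → ℝ) (hp : ∀ i, 0 ≤ p i)
    (F : Fin d → Matrix (Fin n) (Fin n) ℝ)
    (hF : SchurStable (∑ i, p i • (F i ⊗ₖ F i)))
    (e : ℕ → Ω → Fin n → ℝ) (μ : ℕ → Ω → Fin d → ℝ)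
    (he0meas : Measurable (e 0)) (he0L2 : MemLp (e 0) 2 ℙ)
    (hμmeas : ∀ t, Measurable (μ t))
    (hμL2 : ∀ t i, MemLp (fun ω => μ t ω i) 2 ℙ)
    -- `μ(t)` is independent of the σ-algebra generated by `e(0), μ(0), …, μ(t−1)`
    (hindep : ∀ t, ProbabilityTheory.Indep
      (MeasurableSpace.comap (μ t) inferInstance)
      (MeasurableSpace.comap (e 0) inferInstance ⊔
        ⨆ s : ℕ, ⨆ _ : s < t, MeasurableSpace.comap (μ s) inferInstance) ℙ)
    (hcov : ∀ t i j, ∫ ω, μ t ω i * μ t ω j ∂ℙ = if i = j then p i else 0)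
    (hrec : ∀ t ω, e (t + 1) ω = ∑ i, μ t ω i • (F i).mulVec (e t ω)) :
    (∀ t, MemLp (e t) 2 ℙ) ∧
    (∀ t, (Matrix.of fun a b => ∫ ω, e (t + 1) ω a * e (t + 1) ω b ∂ℙ) =
        ∑ i, p i • (F i * (Matrix.of fun a b => ∫ ω, e t ω a * e t ω b ∂ℙ) * (F i)ᵀ)) ∧
    Tendsto (fun t => ∫ ω, ∑ a, (e t ω a) ^ 2 ∂ℙ) atTop (nhds 0) := by
  classical
  -- basic measurability
  have hμc : ∀ t i, Measurable (fun ω => μ t ω i) :=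
    fun t i => (measurable_pi_apply i).comp (hμmeas t)
  have hemeas : ∀ t, Measurable (e t) := by
    intro t
    induction t with
    | zero => exact he0meas
    | succ t ih =>
      have := aux_step_meas F (hμmeas t) ih
      convert this using 1
      exact funext fun ω => hrec t ω
  have hec : ∀ t a, Measurable (fun ω => e t ω a) :=
    fun t a => (measurable_pi_apply a).comp (hemeas t)
  -- the filtration
  set G : ℕ → MeasurableSpace Ω := fun t =>
    MeasurableSpace.comap (e 0) inferInstance ⊔
      ⨆ s : ℕ, ⨆ _ : s < t, MeasurableSpace.comap (μ s) inferInstance with hG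
  have hGmono : Monotone G := by
    intro t t' htt'
    refine sup_le_sup_left ?_ _
    exact iSup_le fun s => iSup_le fun hs =>
      le_iSup_of_le s (le_iSup (fun _ : s < t' => MeasurableSpace.comap (μ s) inferInstance)
        (hs.trans_le htt'))
  have hμG : ∀ s t, s < t → MeasurableSpace.comap (μ s) inferInstance ≤ G t := by
    intro s t hst
    exact le_trans (le_iSup_of_le s (le_iSup
      (fun _ : s < t => MeasurableSpace.comap (μ s) inferInstance) hst)) le_sup_right
  have heG : ∀ t, Measurable[G t] (e t) := by
    intro t
    induction t with
    | zero => exact Measurable.of_comap_le le_sup_left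
    | succ t ih =>
      have hμm : Measurable[G (t+1)] (μ t) :=
        Measurable.of_comap_le (hμG t (t+1) (Nat.lt_succ_self t))
      have hem : Measurable[G (t+1)] (e t) := ih.mono (hGmono (Nat.le_succ t)) le_rfl
      have := aux_step_meas F hμm hem
      convert this using 1
      exact funext fun ω => hrec t ω
  -- independence of μ t and e t
  have hindepF : ∀ t, ProbabilityTheory.IndepFun (μ t) (e t) ℙ := by
    intro t
    exact aux_indep_mono (hindep t) le_rfl ((heG t).comap_le)
  -- independence of functions of μ t and e t
  have hindepC : ∀ t (φ : (Fin d → ℝ) → ℝ) (ψ : (Fin n → ℝ) → ℝ),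
      Measurable φ → Measurable ψ →
      ProbabilityTheory.IndepFun (fun ω => φ (μ t ω)) (fun ω => ψ (e t ω)) ℙ := by
    intro t φ ψ hφ hψ
    exact (hindepF t).comp hφ hψ
  -- L2 of components, by induction
  have heL2c : ∀ t a, MemLp (fun ω => e t ω a) 2 ℙ := by
    intro t
    induction t with
    | zero =>
      intro a
      refine he0L2.of_le ((hec 0 a).aestronglyMeasurable) ?_
      exact Eventually.of_forall fun ω => by
        simpa using norm_le_pi_norm (e 0 ω) a
    | succ t ih =>
      intro a
      have hXL2 : ∀ i, MemLp (fun ω => (F i).mulVec (e t ω) a) 2 ℙ := by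
        intro i
        have : (fun ω => (F i).mulVec (e t ω) a)
            = fun ω => ∑ c, F i a c * e t ω c := by
          funext ω; simp [Matrix.mulVec, dotProduct]
        rw [this, ← Finset.sum_fn]
        exact memLp_finset_sum' _ fun c _ => (ih c).const_mul _
      have hXm : ∀ i, Measurable (fun ω => (F i).mulVec (e t ω) a) := by
        intro i
        have : (fun ω => (F i).mulVec (e t ω) a)
            = fun ω => ∑ c, F i a c * e t ω c := by
          funext ω; simp [Matrix.mulVec, dotProduct]
        rw [this]
        exact Finset.measurable_sum _ fun c _ => (hec t c).const_mul _
      have hterm : ∀ i, MemLp (fun ω => μ t ω i * (F i).mulVec (e t ω) a) 2 ℙ := by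
        intro i
        have hmeas : AEStronglyMeasurable (fun ω => μ t ω i * (F i).mulVec (e t ω) a) ℙ :=
          ((hμc t i).mul (hXm i)).aestronglyMeasurable
        rw [memLp_two_iff_integrable_sq hmeas]
        have hip : ProbabilityTheory.IndepFun
            (fun ω => (μ t ω i) ^ 2) (fun ω => ((F i).mulVec (e t ω) a) ^ 2) ℙ :=
          hindepC t (fun v => (v i) ^ 2) (fun w => ((F i).mulVec w a) ^ 2)
            ((measurable_pi_apply i).pow_const 2)
            ((by
              have h0 : (fun w : Fin n → ℝ => (F i).mulVec w a)
                  = fun w => ∑ c, F i a c * w c := by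
                funext w; simp [Matrix.mulVec, dotProduct]
              have : Measurable fun w : Fin n → ℝ => (F i).mulVec w a := by
                rw [h0]
                exact Finset.measurable_sum _ fun c _ => (measurable_pi_apply c).const_mul _
              exact this.pow_const 2))
        have hint := hip.integrable_mul ((hμL2 t i).integrable_sq) ((hXL2 i).integrable_sq)
        have : (fun ω => (μ t ω i * (F i).mulVec (e t ω) a) ^ 2)
            = fun ω => (μ t ω i) ^ 2 * ((F i).mulVec (e t ω) a) ^ 2 := by
          funext ω; ring
        rw [this]
        exact hint
      have : (fun ω => e (t+1) ω a) = fun ω => ∑ i, μ t ω i * (F i).mulVec (e t ω) a := by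
        funext ω
        rw [hrec t ω]
        simp
      rw [this, ← Finset.sum_fn]
      exact memLp_finset_sum' _ fun i _ => hterm i
  -- L2 of the vector-valued e t
  have heL2 : ∀ t, MemLp (e t) 2 ℙ := by
    intro t
    have hsum : MemLp (fun ω => ∑ a, |e t ω a|) 2 ℙ := by
      rw [← Finset.sum_fn]
      exact memLp_finset_sum' _ fun a _ => (heL2c t a).abs
    refine hsum.of_le ((hemeas t).aestronglyMeasurable) (Eventually.of_forall fun ω => ?_)
    have hnn : (0:ℝ) ≤ ∑ a, |e t ω a| := Finset.sum_nonneg fun a _ => abs_nonneg _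
    rw [Real.norm_eq_abs, abs_of_nonneg hnn]
    refine (pi_norm_le_iff_of_nonneg hnn).2 fun a => ?_
    rw [Real.norm_eq_abs]
    exact Finset.single_le_sum (f := fun a => |e t ω a|) (fun b _ => abs_nonneg _)
      (Finset.mem_univ a)
  -- integrability of products
  have hee_int : ∀ t a b, Integrable (fun ω => e t ω a * e t ω b) ℙ :=
    fun t a b => aux_L2_mul_integrable (heL2c t a) (heL2c t b)
  have hμμ_int : ∀ t i j, Integrable (fun ω => μ t ω i * μ t ω j) ℙ :=
    fun t i j => aux_L2_mul_integrable (hμL2 t i) (hμL2 t j)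
  -- mulVec facts
  have hmulVec_eq : ∀ (i : Fin d) (a : Fin n) (w : Fin n → ℝ),
      (F i).mulVec w a = ∑ c, F i a c * w c := by
    intro i a w; simp [Matrix.mulVec, dotProduct]
  have hmulVec_meas : ∀ (i : Fin d) (a : Fin n),
      Measurable fun w : Fin n → ℝ => (F i).mulVec w a := by
    intro i a
    have : (fun w : Fin n → ℝ => (F i).mulVec w a) = fun w => ∑ c, F i a c * w c := by
      funext w; exact hmulVec_eq i a w
    rw [this]
    exact Finset.measurable_sum _ fun c _ => (measurable_pi_apply c).const_mul _
  have hXL2 : ∀ t (i : Fin d) (a : Fin n), MemLp (fun ω => (F i).mulVec (e t ω) a) 2 ℙ := by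
    intro t i a
    have : (fun ω => (F i).mulVec (e t ω) a) = fun ω => ∑ c, F i a c * e t ω c := by
      funext ω; exact hmulVec_eq i a (e t ω)
    rw [this, ← Finset.sum_fn]
    exact memLp_finset_sum' _ fun c _ => (heL2c t c).const_mul _
  -- the covariance recursion, entrywise
  have hPrec : ∀ t a b, (∫ ω, e (t+1) ω a * e (t+1) ω b ∂ℙ)
      = ∑ i, p i * ∫ ω, (F i).mulVec (e t ω) a * (F i).mulVec (e t ω) b ∂ℙ := by
    intro t a b
    have hexp : (fun ω => e (t+1) ω a * e (t+1) ω b)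
        = fun ω => ∑ i, ∑ j, (μ t ω i * μ t ω j) *
            ((F i).mulVec (e t ω) a * (F j).mulVec (e t ω) b) := by
      funext ω
      rw [hrec t ω]
      simp only [Finset.sum_apply, Pi.smul_apply, smul_eq_mul]
      rw [Finset.sum_mul_sum]
      exact Finset.sum_congr rfl fun i _ => Finset.sum_congr rfl fun j _ => by ring
    have hIij : ∀ i j : Fin d, ProbabilityTheory.IndepFun
        (fun ω => μ t ω i * μ t ω j)
        (fun ω => (F i).mulVec (e t ω) a * (F j).mulVec (e t ω) b) ℙ :=
      fun i j => hindepC t (fun v => v i * v j)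
        (fun w => (F i).mulVec w a * (F j).mulVec w b)
        ((measurable_pi_apply i).mul (measurable_pi_apply j))
        ((hmulVec_meas i a).mul (hmulVec_meas j b))
    have hXX_int : ∀ i j : Fin d,
        Integrable (fun ω => (F i).mulVec (e t ω) a * (F j).mulVec (e t ω) b) ℙ :=
      fun i j => aux_L2_mul_integrable (hXL2 t i a) (hXL2 t j b)
    have hterm_int : ∀ i j : Fin d, Integrable (fun ω => (μ t ω i * μ t ω j) *
        ((F i).mulVec (e t ω) a * (F j).mulVec (e t ω) b)) ℙ :=
      fun i j => (hIij i j).integrable_mul (hμμ_int t i j) (hXX_int i j)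
    rw [hexp, integral_finset_sum _
      (fun i _ => integrable_finset_sum _ (fun j _ => hterm_int i j))]
    refine Finset.sum_congr rfl fun i _ => ?_
    rw [integral_finset_sum _ (fun j _ => hterm_int i j)]
    have : ∀ j : Fin d, (∫ ω, (μ t ω i * μ t ω j) *
        ((F i).mulVec (e t ω) a * (F j).mulVec (e t ω) b) ∂ℙ)
        = (if i = j then p i else 0) *
          ∫ ω, (F i).mulVec (e t ω) a * (F j).mulVec (e t ω) b ∂ℙ := by
      intro j
      rw [← hcov t i j]
      exact (hIij i j).integral_mul_eq_mul_integral (hμμ_int t i j).aestronglyMeasurable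
        (hXX_int i j).aestronglyMeasurable
    rw [Finset.sum_congr rfl (fun j _ => this j)]
    simp [Finset.sum_ite_eq, ite_mul, zero_mul]
  -- the quadratic integral as a matrix entry
  have hFPF : ∀ t (i : Fin d) (a b : Fin n),
      (∫ ω, (F i).mulVec (e t ω) a * (F i).mulVec (e t ω) b ∂ℙ)
      = (F i * (Matrix.of fun a b => ∫ ω, e t ω a * e t ω b ∂ℙ) * (F i)ᵀ) a b := by
    intro t i a b
    have hx : (fun ω => (F i).mulVec (e t ω) a * (F i).mulVec (e t ω) b)
        = fun ω => ∑ c, ∑ c', (F i a c * F i b c') * (e t ω c * e t ω c') := by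
      funext ω
      rw [hmulVec_eq i a (e t ω), hmulVec_eq i b (e t ω), Finset.sum_mul_sum]
      exact Finset.sum_congr rfl fun c _ => Finset.sum_congr rfl fun c' _ => by ring
    rw [hx, integral_finset_sum _
      (fun c _ => integrable_finset_sum _ (fun c' _ => (hee_int t c c').const_mul _))]
    have : ∀ c, (∫ ω, ∑ c', (F i a c * F i b c') * (e t ω c * e t ω c') ∂ℙ)
        = ∑ c', (F i a c * F i b c') * ∫ ω, e t ω c * e t ω c' ∂ℙ := by
      intro c
      rw [integral_finset_sum _ (fun c' _ => (hee_int t c c').const_mul _)]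
      exact Finset.sum_congr rfl fun c' _ => integral_const_mul _ _
    rw [Finset.sum_congr rfl (fun c _ => this c)]
    rw [Finset.sum_comm]
    simp only [Matrix.mul_apply, Matrix.transpose_apply, Matrix.of_apply, Finset.sum_mul]
    exact Finset.sum_congr rfl fun c' _ => Finset.sum_congr rfl fun c _ => by ring
  -- algebraic expansion helper
  have expand : ∀ (Q : Matrix (Fin n) (Fin n) ℝ) (i : Fin d) (a b : Fin n),
      p i * (F i * Q * (F i)ᵀ) a b
      = ∑ c, ∑ c', p i * F i a c * F i b c' * Q c c' := by
    intro Q i a b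
    simp only [Matrix.mul_apply, Matrix.transpose_apply, Finset.sum_mul, Finset.mul_sum]
    rw [Finset.sum_comm]
    exact Finset.sum_congr rfl fun c _ => Finset.sum_congr rfl fun c' _ => by ring
  have hnN : Nonempty (Fin n) := ⟨⟨0, hn⟩⟩
  refine ⟨heL2, ?_, ?_⟩
  · intro t
    ext a b
    simp only [Matrix.of_apply, Matrix.sum_apply, Matrix.smul_apply, smul_eq_mul]
    rw [hPrec t a b]
    exact Finset.sum_congr rfl fun i _ => by rw [hFPF t i a b]
  · set M : Matrix (Fin n × Fin n) (Fin n × Fin n) ℝ := ∑ i, p i • (F i ⊗ₖ F i) with hM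
    set v : ℕ → Fin n × Fin n → ℝ := fun t q => ∫ ω, e t ω q.1 * e t ω q.2 ∂ℙ with hv
    have hvrec : ∀ t, v (t+1) = M *ᵥ v t := by
      intro t
      funext q
      obtain ⟨a, b⟩ := q
      show (∫ ω, e (t+1) ω a * e (t+1) ω b ∂ℙ) = _
      rw [hPrec t a b]
      rw [Finset.sum_congr rfl (fun i (_ : i ∈ Finset.univ) => by rw [hFPF t i a b])]
      rw [Finset.sum_congr rfl (fun i (_ : i ∈ Finset.univ) =>
        expand (Matrix.of fun a b => ∫ ω, e t ω a * e t ω b ∂ℙ) i a b)]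
      simp only [hM, Matrix.mulVec, dotProduct, Matrix.sum_apply, Matrix.smul_apply,
        Matrix.kroneckerMap_apply, smul_eq_mul, Fintype.sum_prod_type, Matrix.of_apply]
      rw [Finset.sum_comm]
      refine Finset.sum_congr rfl fun c _ => ?_
      rw [Finset.sum_comm]
      refine Finset.sum_congr rfl fun c' _ => ?_
      rw [Finset.sum_mul]
      exact Finset.sum_congr rfl fun i _ => by ring
    have hvpow : ∀ t, v t = (M ^ t) *ᵥ v 0 := by
      intro t
      induction t with
      | zero => simp
      | succ t ih => rw [hvrec t, ih, Matrix.mulVec_mulVec, ← pow_succ']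
    have hSeq : ∀ t, (∫ ω, ∑ a, (e t ω a)^2 ∂ℙ) = ∑ a : Fin n, v t (a, a) := by
      intro t
      rw [integral_finset_sum _ (fun a _ => by simpa [pow_two] using hee_int t a a)]
      exact Finset.sum_congr rfl fun a _ => by rw [hv]; simp [pow_two]
    have hgoal : (fun t => ∫ ω, ∑ a, (e t ω a)^2 ∂ℙ)
        = fun t => ∑ a : Fin n, ((M ^ t) *ᵥ v 0) (a, a) :=
      funext fun t => by rw [hSeq t, hvpow t]
    rw [hgoal]
    have hterm : ∀ a : Fin n,
        Tendsto (fun t => ((M ^ t) *ᵥ v 0) (a, a)) atTop (nhds 0) := by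
      intro a
      have h0 : ∀ t, ((M ^ t) *ᵥ v 0) (a, a) = ∑ q, (M ^ t) (a, a) q * v 0 q := by
        intro t; simp [Matrix.mulVec, dotProduct]
      rw [funext h0]
      have := tendsto_finset_sum (Finset.univ : Finset (Fin n × Fin n))
        (f := fun q t => (M ^ t) (a, a) q * v 0 q)
        (fun q _ => (aux_entry_tendsto M hF (a, a) q).mul_const (v 0 q))
      simpa using this
    have := tendsto_finset_sum (Finset.univ : Finset (Fin n))
      (f := fun a t => ((M ^ t) *ᵥ v 0) (a, a)) (fun a _ => hterm a)
    simpa using this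
end

section
/- Let d, n, n', m, p be positive integers, Σ = {1,…,d}, and consider matrices A_i ∈ ℝ^{n×n}, K_i ∈ ℝ^{n×m}, C ∈ ℝ^{p×n} and A'_i ∈ ℝ^{n'×n'}, K'_i ∈ ℝ^{n'×m}, C' ∈ ℝ^{p×n'} for i ∈ Σ. Suppose that for all words w ∈ Σ* and all σ ∈ Σ, C A_w K_σ = C' A'_w K'_σ. Define Ã_i = A_i − K_i C and Ã'_i = A'_i − K'_i C'. Then for all words w ∈ Σ* and all σ ∈ Σ, C Ã_w K_σ = C' Ã'_w K'_σ. -/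
open Matrix

lemma wordProd_append {d : ℕ} {ι : Type} [Fintype ι] [DecidableEq ι]
    (A : Fin d → Matrix ι ι ℝ) (u v : List (Fin d)) :
    wordProd A (u ++ v) = wordProd A v * wordProd A u := by
  induction u with
  | nil => simp [wordProd]
  | cons σ u ih => simp [wordProd, ih, Matrix.mul_assoc]

/- Note: for the product `K_i C` (and hence `Ã_i = A_i − K_i C`) to be defined we must
have `p = m`, so both dimensions are denoted by `m` below. -/
theorem stmt7 (d n n' m : ℕ)
    (hd : 0 < d) (hn : 0 < n) (hn' : 0 < n') (hm : 0 < m)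
    (A : Fin d → Matrix (Fin n) (Fin n) ℝ)
    (K : Fin d → Matrix (Fin n) (Fin m) ℝ)
    (C : Matrix (Fin m) (Fin n) ℝ)
    (A' : Fin d → Matrix (Fin n') (Fin n') ℝ)
    (K' : Fin d → Matrix (Fin n') (Fin m) ℝ)
    (C' : Matrix (Fin m) (Fin n') ℝ)
    (h : ∀ (w : List (Fin d)) (σ : Fin d),
      C * wordProd A w * K σ = C' * wordProd A' w * K' σ) :
    ∀ (w : List (Fin d)) (σ : Fin d),
      C * wordProd (fun i => A i - K i * C) w * K σ =
        C' * wordProd (fun i => A' i - K' i * C') w * K' σ := by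
  suffices key : ∀ (s v : List (Fin d)) (τ : Fin d),
      C * (wordProd (fun i => A i - K i * C) s * wordProd A v) * K τ =
      C' * (wordProd (fun i => A' i - K' i * C') s * wordProd A' v) * K' τ by
    intro w σ
    have := key w [] σ
    simpa [wordProd] using this
  intro s
  induction s with
  | nil =>
    intro v τ
    simpa [wordProd] using h v τ
  | cons σ s ih =>
    intro v τ
    have e1 := ih (v ++ [σ]) τ
    have e2 := ih [] σ
    have e3 := h v τ
    simp only [wordProd, wordProd_append, Matrix.one_mul, Matrix.mul_one] at e1 e2 ⊢
    calc C * (wordProd (fun i => A i - K i * C) s * (A σ - K σ * C) * wordProd A v) * K τ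
        = C * (wordProd (fun i => A i - K i * C) s * (A σ * wordProd A v)) * K τ
          - (C * wordProd (fun i => A i - K i * C) s * K σ) * (C * wordProd A v * K τ) := by
          simp [Matrix.mul_sub, Matrix.sub_mul, Matrix.mul_assoc]
      _ = C' * (wordProd (fun i => A' i - K' i * C') s * (A' σ * wordProd A' v)) * K' τ
          - (C' * wordProd (fun i => A' i - K' i * C') s * K' σ) * (C' * wordProd A' v * K' τ) := by
          rw [e1, e2, e3]
      _ = C' * (wordProd (fun i => A' i - K' i * C') s * (A' σ - K' σ * C') * wordProd A' v) * K' τ := by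
          simp [Matrix.mul_sub, Matrix.sub_mul, Matrix.mul_assoc]
end

section
/- Let d, n, m, p be positive integers, Σ = {1,…,d}, and let ({A_i, K_i}_{i=1}^d, C) be a dLPV-SSA of dimension n. Then ({A_i, K_i}_{i=1}^d, C) is minimal if and only if the dLPV-SSA ({A_i − K_i C, K_i}_{i=1}^d, C) is minimal. -/
open Matrix

/-- A dLPV-SSA `({A_i, K_i}, C)` of dimension `n` is minimal if every dLPV-SSA of any
dimension `n'` with the same sub-Markov parameters `C A_w K_σ` satisfies `n' ≥ n`. -/
def IsMinimal (d m p n : ℕ)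
    (A : Fin d → Matrix (Fin n) (Fin n) ℝ)
    (K : Fin d → Matrix (Fin n) (Fin m) ℝ)
    (C : Matrix (Fin p) (Fin n) ℝ) : Prop :=
  ∀ (n' : ℕ) (A' : Fin d → Matrix (Fin n') (Fin n') ℝ)
    (K' : Fin d → Matrix (Fin n') (Fin m) ℝ) (C' : Matrix (Fin p) (Fin n') ℝ),
    (∀ (w : List (Fin d)) (σ : Fin d),
      C' * wordProd A' w * K' σ = C * wordProd A w * K σ) → n ≤ n'

/- Note: for the product `K_i C` (and hence `A_i − K_i C`) to be defined we must
have `p = m`, so both dimensions are denoted by `m` below. -/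
lemma wordProd_append_singleton {d n : ℕ} (A : Fin d → Matrix (Fin n) (Fin n) ℝ)
    (w : List (Fin d)) (τ : Fin d) :
    wordProd A (w ++ [τ]) = A τ * wordProd A w := by
  induction w with
  | nil => simp [wordProd]
  | cons σ s ih => simp [wordProd, ih, mul_assoc]

lemma key_add {d n n' m : ℕ}
    (A : Fin d → Matrix (Fin n) (Fin n) ℝ) (K : Fin d → Matrix (Fin n) (Fin m) ℝ)
    (C : Matrix (Fin m) (Fin n) ℝ)
    (A' : Fin d → Matrix (Fin n') (Fin n') ℝ) (K' : Fin d → Matrix (Fin n') (Fin m) ℝ)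
    (C' : Matrix (Fin m) (Fin n') ℝ)
    (h : ∀ w σ, C' * wordProd A' w * K' σ = C * wordProd A w * K σ) :
    ∀ w σ, C' * wordProd (fun i => A' i + K' i * C') w * K' σ
         = C * wordProd (fun i => A i + K i * C) w * K σ := by
  set G := fun i => A i + K i * C with hG
  set G' := fun i => A' i + K' i * C' with hG'
  have main : ∀ (w v : List (Fin d)) (σ : Fin d),
      C' * wordProd A' v * wordProd G' w * K' σ
        = C * wordProd A v * wordProd G w * K σ := by
    intro w
    induction w using List.reverseRecOn with
    | nil => intro v σ; simpa [wordProd] using h v σ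
    | append_singleton sw τ ih =>
      intro v σ
      rw [wordProd_append_singleton, wordProd_append_singleton]
      calc C' * wordProd A' v * (G' τ * wordProd G' sw) * K' σ
          = C' * wordProd A' (τ :: v) * wordProd G' sw * K' σ
            + (C' * wordProd A' v * K' τ)
                * (C' * wordProd A' [] * wordProd G' sw * K' σ) := by
              simp only [hG', wordProd]
              simp only [Matrix.mul_add, Matrix.add_mul, Matrix.mul_assoc, Matrix.one_mul]
        _ = C * wordProd A (τ :: v) * wordProd G sw * K σ
            + (C * wordProd A v * K τ)
                * (C * wordProd A [] * wordProd G sw * K σ) := by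
              rw [ih (τ :: v) σ, ih [] σ, h v τ]
        _ = C * wordProd A v * (G τ * wordProd G sw) * K σ := by
              simp only [hG, wordProd]
              simp only [Matrix.mul_add, Matrix.add_mul, Matrix.mul_assoc, Matrix.one_mul]
  intro w σ
  simpa [wordProd] using main w [] σ

lemma key_sub {d n n' m : ℕ}
    (A : Fin d → Matrix (Fin n) (Fin n) ℝ) (K : Fin d → Matrix (Fin n) (Fin m) ℝ)
    (C : Matrix (Fin m) (Fin n) ℝ)
    (A' : Fin d → Matrix (Fin n') (Fin n') ℝ) (K' : Fin d → Matrix (Fin n') (Fin m) ℝ)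
    (C' : Matrix (Fin m) (Fin n') ℝ)
    (h : ∀ w σ, C' * wordProd A' w * K' σ = C * wordProd A w * K σ) :
    ∀ w σ, C' * wordProd (fun i => A' i - K' i * C') w * K' σ
         = C * wordProd (fun i => A i - K i * C) w * K σ := by
  set G := fun i => A i - K i * C with hG
  set G' := fun i => A' i - K' i * C' with hG'
  have main : ∀ (w v : List (Fin d)) (σ : Fin d),
      C' * wordProd A' v * wordProd G' w * K' σ
        = C * wordProd A v * wordProd G w * K σ := by
    intro w
    induction w using List.reverseRecOn with
    | nil => intro v σ; simpa [wordProd] using h v σ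
    | append_singleton sw τ ih =>
      intro v σ
      rw [wordProd_append_singleton, wordProd_append_singleton]
      calc C' * wordProd A' v * (G' τ * wordProd G' sw) * K' σ
          = C' * wordProd A' (τ :: v) * wordProd G' sw * K' σ
            - (C' * wordProd A' v * K' τ)
                * (C' * wordProd A' [] * wordProd G' sw * K' σ) := by
              simp only [hG', wordProd]
              simp only [Matrix.mul_sub, Matrix.sub_mul, Matrix.mul_assoc, Matrix.one_mul]
        _ = C * wordProd A (τ :: v) * wordProd G sw * K σ
            - (C * wordProd A v * K τ)
                * (C * wordProd A [] * wordProd G sw * K σ) := by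
              rw [ih (τ :: v) σ, ih [] σ, h v τ]
        _ = C * wordProd A v * (G τ * wordProd G sw) * K σ := by
              simp only [hG, wordProd]
              simp only [Matrix.mul_sub, Matrix.sub_mul, Matrix.mul_assoc, Matrix.one_mul]
  intro w σ
  simpa [wordProd] using main w [] σ

theorem stmt8 (d n m : ℕ) (hd : 0 < d) (hn : 0 < n) (hm : 0 < m)
    (A : Fin d → Matrix (Fin n) (Fin n) ℝ)
    (K : Fin d → Matrix (Fin n) (Fin m) ℝ)
    (C : Matrix (Fin m) (Fin n) ℝ) :
    IsMinimal d m m n A K C ↔ IsMinimal d m m n (fun i => A i - K i * C) K C := by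
  constructor
  · intro h n' A' K' C' hp
    refine h n' (fun i => A' i + K' i * C') K' C' ?_
    intro w σ
    have := key_add (fun i => A i - K i * C) K C A' K' C' hp w σ
    simpa using this
  · intro h n' A' K' C' hp
    refine h n' (fun i => A' i - K' i * C') K' C' ?_
    intro w σ
    exact key_sub A K C A' K' C' hp w σ
end

section
/- Let d, n, n', m, p be positive integers, Σ = {1,…,d}, and consider matrices A_i ∈ ℝ^{n×n}, K_i ∈ ℝ^{n×m}, C ∈ ℝ^{p×n} and A'_i ∈ ℝ^{n'×n'}, K'_i ∈ ℝ^{n'×m}, C' ∈ ℝ^{p×n'}, i ∈ Σ, such that C A_w K_σ = C' A'_w K'_σ for all words w ∈ Σ* and all σ ∈ Σ. For arbitrary sequences u : ℕ → ℝ^m and μ : ℕ → ℝ^d, define x : ℕ → ℝⁿ and x' : ℕ → ℝ^{n'} by x(0) = 0, x'(0) = 0, x(t+1) = Σ_{i=1}^d (A_i x(t) + K_i u(t)) μ_i(t), x'(t+1) = Σ_{i=1}^d (A'_i x'(t) + K'_i u(t)) μ_i(t), and outputs y(t) = C x(t), y'(t) = C' x'(t). Then y(t) = y'(t) for all t ∈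 ℕ. -/
open Matrix

theorem stmt9 (d n n' m p : ℕ)
    (hd : 0 < d) (hn : 0 < n) (hn' : 0 < n') (hm : 0 < m) (hpp : 0 < p)
    (A : Fin d → Matrix (Fin n) (Fin n) ℝ)
    (K : Fin d → Matrix (Fin n) (Fin m) ℝ)
    (C : Matrix (Fin p) (Fin n) ℝ)
    (A' : Fin d → Matrix (Fin n') (Fin n') ℝ)
    (K' : Fin d → Matrix (Fin n') (Fin m) ℝ)
    (C' : Matrix (Fin p) (Fin n') ℝ)
    (h : ∀ (w : List (Fin d)) (σ : Fin d),
      C * wordProd A w * K σ = C' * wordProd A' w * K' σ)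
    (u : ℕ → Fin m → ℝ) (μ : ℕ → Fin d → ℝ)
    (x : ℕ → Fin n → ℝ) (x' : ℕ → Fin n' → ℝ)
    (hx0 : x 0 = 0) (hx'0 : x' 0 = 0)
    (hx : ∀ t, x (t + 1) = ∑ i, μ t i • ((A i).mulVec (x t) + (K i).mulVec (u t)))
    (hx' : ∀ t, x' (t + 1) = ∑ i, μ t i • ((A' i).mulVec (x' t) + (K' i).mulVec (u t))) :
    ∀ t : ℕ, C.mulVec (x t) = C'.mulVec (x' t) := by
  have key : ∀ t : ℕ, ∀ w : List (Fin d),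
      (C * wordProd A w).mulVec (x t) = (C' * wordProd A' w).mulVec (x' t) := by
    intro t
    induction t with
    | zero => intro w; simp [hx0, hx'0]
    | succ t ih =>
      intro w
      rw [hx, hx']
      simp only [← Matrix.mulVecLin_apply, map_sum]
      simp only [Matrix.mulVecLin_apply]
      refine Finset.sum_congr rfl fun i _ => ?_
      rw [Matrix.mulVec_smul, Matrix.mulVec_smul, Matrix.mulVec_add, Matrix.mulVec_add,
        Matrix.mulVec_mulVec, Matrix.mulVec_mulVec, Matrix.mulVec_mulVec, Matrix.mulVec_mulVec]
      have h1 := ih (i :: w)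
      simp only [wordProd, ← Matrix.mul_assoc] at h1
      rw [h1, h w i]
  intro t
  have := key t []
  simpa [wordProd, Matrix.mul_one] using this
end
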